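/- arXiv:2304.12193 — 13 statements merged into one kernel-verified Lean document; each statement's English description precedes it below -/
import Mathlib

section
/- Let p be a prime, n ≥ 1, and let μ be an integer with μ not divisible by p. Define Γ on the set H = {x ∈ ZMod(p^n) : p divides x} by Γ(x) = μ·x·(x+1) (computed in ZMod(p^n)). Then Γ maps H into H and is a bijection of H onto itself. -/
/-!
On multiples of `p` the map `x ↦ μ x (x + 1)` is injective because
`x (x + 1) - y (y + 1) = (x - y) (x + y + 1)` and `x + y + 1` is a unit, `x + y` being nilpotent
in `ZMod (p ^ n)`; since `μ` is a unit and the set is finite and stable, injectivity gives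
bijectivity.
-/

section Nilpotent

variable {R : Type*} [CommRing R]

theorem injOn_mul_mul_add_one_setOf_isNilpotent {u : R} (hu : IsUnit u) :
    Set.InjOn (fun x : R => u * x * (x + 1)) {x | IsNilpotent x} := by
  intro x hx y hy hxy
  have hsq : x * (x + 1) = y * (y + 1) :=
    hu.mul_left_cancel (by simpa only [mul_assoc] using hxy)
  have hunit : IsUnit (x + y + 1) :=
    ((Commute.all x y).isNilpotent_add hx hy).isUnit_add_one
  have hfac : (x + y + 1) * (x - y) = 0 := by
    rw [← sub_eq_zero.mpr hsq]
    ring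
  exact sub_eq_zero.mp (hunit.mul_right_eq_zero.mp hfac)

theorem bijOn_mul_mul_add_one_setOf_dvd [Finite R] {a u : R} (ha : IsNilpotent a)
    (hu : IsUnit u) :
    Set.BijOn (fun x : R => u * x * (x + 1)) {x | a ∣ x} {x | a ∣ x} := by
  have hmaps : Set.MapsTo (fun x : R => u * x * (x + 1)) {x | a ∣ x} {x | a ∣ x} :=
    fun x hx => (hx.mul_left u).mul_right (x + 1)
  refine ((Set.toFinite _).injOn_iff_bijOn_of_mapsTo hmaps).mp ?_
  refine (injOn_mul_mul_add_one_setOf_isNilpotent hu).mono ?_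
  rintro _ ⟨b, rfl⟩
  exact (Commute.all a b).isNilpotent_mul_right ha

end Nilpotent

theorem ZMod.isNilpotent_natCast_self_pow (m n : ℕ) : IsNilpotent (m : ZMod (m ^ n)) :=
  ⟨n, by rw [← Nat.cast_pow, ZMod.natCast_self]⟩

theorem ZMod.isUnit_intCast_of_not_dvd {p : ℕ} (hp : p.Prime) (n : ℕ) {z : ℤ}
    (hz : ¬ (p : ℤ) ∣ z) : IsUnit (z : ZMod (p ^ n)) := by
  rw [ZMod.coe_int_isUnit_iff_isCoprime, Nat.cast_pow]
  exact ((Nat.prime_iff_prime_int.mp hp).coprime_iff_not_dvd.mpr hz).pow_left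

theorem logistic_bijOn_multiples_of_p_general (p : ℕ) (hp : p.Prime) (n : ℕ)
    (μ : ℤ) (hμ : ¬ (p : ℤ) ∣ μ) :
    Set.BijOn (fun x : ZMod (p ^ n) => (μ : ZMod (p ^ n)) * x * (x + 1))
      {x : ZMod (p ^ n) | (p : ZMod (p ^ n)) ∣ x}
      {x : ZMod (p ^ n) | (p : ZMod (p ^ n)) ∣ x} := by
  have : NeZero (p ^ n) := ⟨pow_ne_zero n hp.ne_zero⟩
  exact bijOn_mul_mul_add_one_setOf_dvd (ZMod.isNilpotent_natCast_self_pow p n)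
    (ZMod.isUnit_intCast_of_not_dvd hp n hμ)

/-- Property 1: For a prime `p`, `n ≥ 1`, and an integer `μ` not divisible by `p`,
the map `Γ(x) = μ·x·(x+1)` on `ZMod (p^n)` restricts to a bijection of the set
`H = {x : ZMod (p^n) | p ∣ x}` onto itself. -/
theorem logistic_bijOn_multiples_of_p (p : ℕ) (hp : p.Prime) (n : ℕ) (hn : 1 ≤ n)
    (μ : ℤ) (hμ : ¬ (p : ℤ) ∣ μ) :
    Set.BijOn (fun x : ZMod (p ^ n) => (μ : ZMod (p ^ n)) * x * (x + 1))
      {x : ZMod (p ^ n) | (p : ZMod (p ^ n)) ∣ x}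
      {x : ZMod (p ^ n) | (p : ZMod (p ^ n)) ∣ x} :=
  logistic_bijOn_multiples_of_p_general p hp n μ hμ
end

section
/- Let μ be a positive integer and define F : ℤ → ℤ by F(x) = μ·x·(x+1). For every n ≥ 1 there exist positive integers a_{i,n} for 3 ≤ i ≤ 2^n such that for all x ∈ ℤ, the n-th iterate satisfies F^[n](x) = (∑_{i=3}^{2^n} a_{i,n}·x^i) + (∑_{j=n}^{2n-1} μ^j)·x^2 + μ^n·x. -/
/-!
`F^[n]` is evaluation of the polynomial `Pₙ` with `P₀ = X`, `Pₙ₊₁ = μ (Pₙ² + Pₙ)`, of degree at most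
`2ⁿ`. Its coefficients are nonnegative, and every coefficient of degree `2 ≤ k ≤ 2ⁿ⁺¹` of `Pₙ₊₁` is
positive because `k = i + j` with `1 ≤ i, j ≤ 2ⁿ`, so by induction all coefficients of degree
`1, …, 2ⁿ` are positive. The low coefficients obey `c₀' = 0`, `c₁' = μ c₁` and `c₂' = μ (c₁² + c₂)`,
which gives `μⁿ` and `μⁿ (1 + μ + ⋯ + μⁿ⁻¹)`.
-/

open Polynomial Finset

variable {R : Type*}

namespace Polynomial

theorem coeff_mul_le_coeff_mul_add [Semiring R] [PartialOrder R] [IsOrderedRing R]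
    {p q : R[X]} (hp : ∀ k, 0 ≤ p.coeff k) (hq : ∀ k, 0 ≤ q.coeff k) (i j : ℕ) :
    p.coeff i * q.coeff j ≤ (p * q).coeff (i + j) := by
  rw [coeff_mul]
  exact single_le_sum (f := fun ij : ℕ × ℕ => p.coeff ij.1 * q.coeff ij.2) (a := (i, j))
    (fun ij _ => mul_nonneg (hp _) (hq _)) (mem_antidiagonal.2 rfl)

theorem eval_eq_sum_Icc_three_add [Semiring R] {p : R[X]} {N : ℕ} (hN : 2 ≤ N)
    (hp : p.natDegree ≤ N) (x : R) :
    p.eval x = ∑ i ∈ Icc 3 N, p.coeff i * x ^ i + p.coeff 2 * x ^ 2 + p.coeff 1 * x + p.coeff 0 := by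
  rw [eval_eq_sum_range' (Nat.lt_succ_of_le hp), range_eq_Ico,
    ← sum_Ico_consecutive _ (Nat.zero_le 3) (by omega : 3 ≤ N + 1), Ico_add_one_right_eq_Icc,
    show Ico 0 3 = {0, 1, 2} from rfl, sum_insert (by simp), sum_insert (by simp), sum_singleton]
  simp only [pow_zero, mul_one, pow_one]
  abel

end Polynomial

theorem sum_Icc_pow_eq_pow_mul_sum_range [CommSemiring R] (μ : R) {n : ℕ} (hn : 1 ≤ n) :
    ∑ j ∈ Icc n (2 * n - 1), μ ^ j = μ ^ n * ∑ j ∈ range n, μ ^ j := by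
  obtain ⟨m, rfl⟩ := Nat.exists_eq_add_of_le' hn
  rw [show 2 * (m + 1) - 1 = 2 * m + 1 by omega, ← Ico_add_one_right_eq_Icc, sum_Ico_eq_sum_range,
    mul_sum]
  exact sum_congr (by congr 1; omega) fun j _ => pow_add _ _ _

noncomputable def logisticPoly [Semiring R] (μ : R) : ℕ → R[X]
  | 0 => X
  | n + 1 => C μ * (logisticPoly μ n ^ 2 + logisticPoly μ n)

namespace logisticPoly

section CommSemiring

variable [CommSemiring R] (μ : R)

theorem iterate_eq_eval (n : ℕ) (x : R) :
    (fun y : R => μ * y * (y + 1))^[n] x = (logisticPoly μ n).eval x := by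
  induction n with
  | zero => simp [logisticPoly]
  | succ n ih =>
    rw [Function.iterate_succ_apply', ih, logisticPoly]
    simp only [eval_mul, eval_C, eval_add, eval_pow]
    ring

theorem natDegree_le (n : ℕ) : (logisticPoly μ n).natDegree ≤ 2 ^ n := by
  induction n with
  | zero => exact natDegree_X_le
  | succ n ih =>
    calc (logisticPoly μ (n + 1)).natDegree
        ≤ (logisticPoly μ n ^ 2 + logisticPoly μ n).natDegree := natDegree_C_mul_le _ _
      _ ≤ max (2 * (logisticPoly μ n).natDegree) (logisticPoly μ n).natDegree :=
          (natDegree_add_le _ _).trans (max_le_max natDegree_pow_le le_rfl)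
      _ ≤ 2 ^ (n + 1) := by rw [pow_succ]; omega

theorem coeff_zero (n : ℕ) : (logisticPoly μ n).coeff 0 = 0 := by
  rw [coeff_zero_eq_eval_zero, ← iterate_eq_eval]
  exact Function.iterate_fixed (by simp) n

theorem coeff_one (n : ℕ) : (logisticPoly μ n).coeff 1 = μ ^ n := by
  induction n with
  | zero => simp [logisticPoly]
  | succ n ih =>
    rw [logisticPoly, coeff_C_mul, coeff_add, sq, coeff_mul,
      Nat.sum_antidiagonal_eq_sum_range_succ_mk]
    simp only [sum_range_succ, sum_range_zero, Nat.reduceSub, logisticPoly.coeff_zero, ih]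
    ring

theorem coeff_two (n : ℕ) :
    (logisticPoly μ n).coeff 2 = μ ^ n * ∑ j ∈ range n, μ ^ j := by
  induction n with
  | zero => simp [logisticPoly, coeff_X]
  | succ n ih =>
    rw [logisticPoly, coeff_C_mul, coeff_add, sq, coeff_mul,
      Nat.sum_antidiagonal_eq_sum_range_succ_mk]
    simp only [sum_range_succ, sum_range_zero, Nat.reduceSub, logisticPoly.coeff_zero,
      logisticPoly.coeff_one, ih]
    ring

end CommSemiring

section Ordered

variable [CommSemiring R] [PartialOrder R] {μ : R}

theorem coeff_nonneg [IsOrderedRing R] (hμ : 0 ≤ μ) (n i : ℕ) : 0 ≤ (logisticPoly μ n).coeff i := by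
  induction n generalizing i with
  | zero =>
    rw [logisticPoly, coeff_X]
    split_ifs <;> simp
  | succ n ih =>
    rw [logisticPoly, coeff_C_mul, coeff_add, sq, coeff_mul]
    exact mul_nonneg hμ (add_nonneg (sum_nonneg fun _ _ => mul_nonneg (ih _) (ih _)) (ih i))

theorem coeff_pos [IsStrictOrderedRing R] (hμ : 0 < μ) {n i : ℕ} (hi : 1 ≤ i) (hin : i ≤ 2 ^ n) :
    0 < (logisticPoly μ n).coeff i := by
  induction n generalizing i with
  | zero =>
    obtain rfl : i = 1 := by rw [pow_zero] at hin; omega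
    simp [logisticPoly]
  | succ n ih =>
    rcases eq_or_lt_of_le hi with rfl | hi
    · exact coeff_one μ (n + 1) ▸ pow_pos hμ _
    obtain ⟨j, k, rfl, hj, hjn, hk, hkn⟩ :
        ∃ j k, i = j + k ∧ 1 ≤ j ∧ j ≤ 2 ^ n ∧ 1 ≤ k ∧ k ≤ 2 ^ n := by
      rw [pow_succ] at hin
      exact ⟨min (i - 1) (2 ^ n), i - min (i - 1) (2 ^ n), by omega, by omega, by omega, by omega,
        by omega⟩
    have hnn := coeff_nonneg hμ.le n
    rw [logisticPoly, coeff_C_mul, coeff_add, sq]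
    exact mul_pos hμ (add_pos_of_pos_of_nonneg ((mul_pos (ih hj hjn) (ih hk hkn)).trans_le
      (coeff_mul_le_coeff_mul_add hnn hnn j k)) (hnn _))

end Ordered

end logisticPoly

/-- Property 2: For a positive integer `μ` and `F(x) = μ·x·(x+1)` on `ℤ`, for every
`n ≥ 1` there are positive integers `a_{i,n}` (for `3 ≤ i ≤ 2^n`) such that
`F^[n](x) = ∑_{i=3}^{2^n} a_{i,n} x^i + (∑_{j=n}^{2n-1} μ^j) x^2 + μ^n x` for all `x`. -/
theorem logistic_iterate_expansion (μ : ℕ) (hμ : 0 < μ) (n : ℕ) (hn : 1 ≤ n) :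
    ∃ a : ℕ → ℤ, (∀ i, 3 ≤ i → i ≤ 2 ^ n → 0 < a i) ∧
      ∀ x : ℤ,
        (fun y : ℤ => (μ : ℤ) * y * (y + 1))^[n] x =
          (∑ i ∈ Finset.Icc 3 (2 ^ n), a i * x ^ i) +
            (∑ j ∈ Finset.Icc n (2 * n - 1), (μ : ℤ) ^ j) * x ^ 2 + (μ : ℤ) ^ n * x := by
  refine ⟨(logisticPoly (μ : ℤ) n).coeff,
    fun i hi hin => logisticPoly.coeff_pos (by exact_mod_cast hμ) (by omega) hin, fun x => ?_⟩
  rw [logisticPoly.iterate_eq_eval,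
    eval_eq_sum_Icc_three_add (Nat.le_self_pow (by omega) 2) (logisticPoly.natDegree_le _ n),
    logisticPoly.coeff_zero, logisticPoly.coeff_one, logisticPoly.coeff_two,
    sum_Icc_pow_eq_pow_mul_sum_range _ hn, add_zero]
end

section
/- Let p be a prime, μ a positive integer, and F : ℤ → ℤ defined by F(x) = μ·x·(x+1). Suppose n ≥ 1, w ≥ 2, x is an integer divisible by p, the sum ∑_{j=0}^{n-1} μ^j is divisible by p, and F^[n](x) = x + k·p^w for some integer k not divisible by p (equivalently, F^[n](x) ≡ x (mod p^w) but F^[n](x) ≢ x (mod p^{w+1})). Then for every i ≥ 1, F^[i·n](x) ≡ x + k·p^w·(∑_{j=0}^{i-1} μ^{j·n}) (mod p^{w+2}). -/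
/-!
Let `x` be a multiple of `p` and `F y = μ y (y + 1)`. Modulo `p ^ 2` we have `F y ≡ μ y` on
multiples of `p`, so `F^[t] x ≡ μ ^ t x` and `∑_{t<n} F^[t] x ≡ (∑_{t<n} μ ^ t) x ≡ 0`. Hence the derivative
`(F^[n])' x = ∏_{t<n} μ (2 F^[t] x + 1) ≡ μ ^ n (1 + 2 ∑_{t<n} F^[t] x) ≡ μ ^ n (mod p ^ 2)`.
Since `w ≥ 2`, the first-order expansion of `F^[n]` at `x` is exact modulo `p ^ (w + 2)` on
`x + p ^ w ℤ`, giving `F^[n] (x + c p ^ w) ≡ x + k p ^ w + μ ^ n c p ^ w`; iterating this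
produces the geometric sum.
-/

open Finset Function

/-- Chain rule for first-order expansions, with `f'` a derivative of `f` only modulo squares. -/
theorem sq_dvd_iterate_add_sub_sub_mul_prod {R : Type*} [CommRing R] {f f' : R → R}
    (hf : ∀ y d, d ^ 2 ∣ f (y + d) - f y - d * f' y) (m : ℕ) (y d : R) :
    d ^ 2 ∣ f^[m] (y + d) - f^[m] y - d * ∏ t ∈ range m, f' (f^[t] y) := by
  induction m with
  | zero => simp
  | succ m ih =>
    obtain ⟨c, hc⟩ := ih
    set P := ∏ t ∈ range m, f' (f^[t] y)
    set z := f^[m] y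
    obtain ⟨c', hc'⟩ := hf z (d * (P + d * c))
    have hshift : f^[m] (y + d) = z + d * (P + d * c) := by linear_combination hc
    rw [iterate_succ_apply', iterate_succ_apply', prod_range_succ, hshift]
    exact ⟨(P + d * c) ^ 2 * c' + c * f' z, by linear_combination hc'⟩

theorem sq_dvd_prod_one_add_sub_one_add_sum {R ι : Type*} [CommRing R] {q : R} {s : Finset ι}
    {a : ι → R} (h : ∀ i ∈ s, q ∣ a i) :
    q ^ 2 ∣ ∏ i ∈ s, (1 + a i) - (1 + ∑ i ∈ s, a i) := by
  classical
  induction s using Finset.induction_on with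
  | empty => simp
  | insert j s hj ih =>
    obtain ⟨c, hc⟩ := ih fun i hi => h i (mem_insert_of_mem hi)
    obtain ⟨b, hb⟩ := h j (mem_insert_self j s)
    obtain ⟨b', hb'⟩ := dvd_sum fun i hi => h i (mem_insert_of_mem hi)
    rw [prod_insert hj, sum_insert hj]
    exact ⟨(1 + a j) * c + b * b', by
      linear_combination (1 + a j) * hc + (∑ i ∈ s, a i) * hb + q * b * hb'⟩

def logistic (μ y : ℤ) : ℤ := μ * y * (y + 1)

theorem sq_dvd_logistic_add_sub_sub_mul (μ y d : ℤ) :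
    d ^ 2 ∣ logistic μ (y + d) - logistic μ y - d * (μ * (2 * y + 1)) :=
  ⟨μ, by unfold logistic; ring⟩

theorem dvd_iterate_logistic {q μ x : ℤ} (hx : q ∣ x) (m : ℕ) : q ∣ (logistic μ)^[m] x :=
  Set.MapsTo.iterate (s := {y | q ∣ y}) (fun _ hy => (hy.mul_left μ).mul_right _) m hx

theorem iterate_logistic_modEq {q μ x : ℤ} (hx : q ∣ x) (m : ℕ) :
    (logistic μ)^[m] x ≡ μ ^ m * x [ZMOD q ^ 2] := by
  induction m with
  | zero => simp [Int.ModEq.refl]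
  | succ m ih =>
    obtain ⟨b, hb⟩ := dvd_iterate_logistic (μ := μ) hx m
    have hquad : logistic μ ((logistic μ)^[m] x) ≡ μ * (logistic μ)^[m] x [ZMOD q ^ 2] :=
      (Int.modEq_iff_dvd.mpr ⟨μ * b ^ 2, by rw [hb]; unfold logistic; ring⟩).symm
    rw [iterate_succ_apply', pow_succ' μ m, mul_assoc]
    exact hquad.trans (ih.mul_left μ)

theorem prod_logistic_deriv_modEq {q μ x : ℤ} {n : ℕ} (hx : q ∣ x)
    (hsum : q ∣ ∑ j ∈ range n, μ ^ j) :
    ∏ t ∈ range n, μ * (2 * (logistic μ)^[t] x + 1) ≡ μ ^ n [ZMOD q ^ 2] := by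
  have hiter : ∑ t ∈ range n, (logistic μ)^[t] x ≡ 0 [ZMOD q ^ 2] :=
    calc ∑ t ∈ range n, (logistic μ)^[t] x
        ≡ ∑ t ∈ range n, μ ^ t * x [ZMOD q ^ 2] :=
          Int.ModEq.sum fun t _ => iterate_logistic_modEq hx t
      _ = (∑ t ∈ range n, μ ^ t) * x := (sum_mul ..).symm
      _ ≡ 0 [ZMOD q ^ 2] := (Int.modEq_zero_iff_dvd.mpr (pow_two q ▸ mul_dvd_mul hsum hx))
  have hprod : ∏ t ∈ range n, (1 + 2 * (logistic μ)^[t] x)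
      ≡ 1 + ∑ t ∈ range n, 2 * (logistic μ)^[t] x [ZMOD q ^ 2] :=
    (Int.modEq_iff_dvd.mpr (sq_dvd_prod_one_add_sub_one_add_sum
      fun t _ => (dvd_iterate_logistic hx t).mul_left 2)).symm
  calc ∏ t ∈ range n, μ * (2 * (logistic μ)^[t] x + 1)
      = μ ^ n * ∏ t ∈ range n, (1 + 2 * (logistic μ)^[t] x) := by
        rw [prod_mul_distrib, prod_const, card_range]
        simp only [add_comm]
    _ ≡ μ ^ n * (1 + 2 * ∑ t ∈ range n, (logistic μ)^[t] x) [ZMOD q ^ 2] := by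
        rw [mul_sum]; exact hprod.mul_left _
    _ ≡ μ ^ n * (1 + 2 * 0) [ZMOD q ^ 2] := ((hiter.mul_left 2).add_left 1).mul_left _
    _ = μ ^ n := by ring

theorem iterate_logistic_modEq_of_pow_dvd_sub {q μ x y : ℤ} {n w : ℕ} (hw : 2 ≤ w)
    (hx : q ∣ x) (hsum : q ∣ ∑ j ∈ range n, μ ^ j) (hy : q ^ w ∣ y - x) :
    (logistic μ)^[n] y ≡ (logistic μ)^[n] x + μ ^ n * (y - x) [ZMOD q ^ (w + 2)] := by
  set P := ∏ t ∈ range n, μ * (2 * (logistic μ)^[t] x + 1)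
  have hlin : (y - x) ^ 2 ∣ (logistic μ)^[n] y - (logistic μ)^[n] x - (y - x) * P := by
    simpa using
      sq_dvd_iterate_add_sub_sub_mul_prod (sq_dvd_logistic_add_sub_sub_mul μ) n x (y - x)
  have hsq : q ^ (w + 2) ∣ (y - x) ^ 2 :=
    (pow_dvd_pow q (by omega)).trans (pow_mul q w 2 ▸ pow_dvd_pow_of_dvd hy 2)
  have hP : q ^ (w + 2) ∣ (y - x) * (P - μ ^ n) :=
    pow_add q w 2 ▸ mul_dvd_mul hy (prod_logistic_deriv_modEq hx hsum).symm.dvd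
  refine (Int.modEq_iff_dvd.mpr ?_).symm
  rw [show (logistic μ)^[n] y - ((logistic μ)^[n] x + μ ^ n * (y - x))
      = ((logistic μ)^[n] y - (logistic μ)^[n] x - (y - x) * P) + (y - x) * (P - μ ^ n) by ring]
  exact (hsq.trans hlin).add hP

theorem sum_range_succ_pow_mul {R : Type*} [CommSemiring R] (μ : R) (n i : ℕ) :
    ∑ j ∈ range (i + 1), μ ^ (j * n) = 1 + μ ^ n * ∑ j ∈ range i, μ ^ (j * n) := by
  rw [sum_range_succ', mul_sum]
  simp only [add_mul, one_mul, pow_add, zero_mul, pow_zero, mul_comm (μ ^ n)]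
  ring

theorem iterate_mul_logistic_modEq {q μ x k : ℤ} {n w : ℕ} (hw : 2 ≤ w) (hx : q ∣ x)
    (hsum : q ∣ ∑ j ∈ range n, μ ^ j) (hFn : (logistic μ)^[n] x = x + k * q ^ w) (i : ℕ) :
    (logistic μ)^[i * n] x ≡ x + k * q ^ w * ∑ j ∈ range i, μ ^ (j * n) [ZMOD q ^ (w + 2)] := by
  induction i with
  | zero => simp [Int.ModEq.refl]
  | succ i ih =>
    set y := (logistic μ)^[i * n] x
    set S := ∑ j ∈ range i, μ ^ (j * n)
    have hy : q ^ w ∣ y - x := by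
      have hlow : q ^ w ∣ x + k * q ^ w * S - y := (pow_dvd_pow q (by omega)).trans ih.dvd
      rw [show y - x = k * q ^ w * S - (x + k * q ^ w * S - y) by ring]
      exact ((dvd_mul_left _ k).mul_right S).sub hlow
    calc (logistic μ)^[(i + 1) * n] x
        = (logistic μ)^[n] y := by rw [add_one_mul, add_comm, iterate_add_apply]
      _ ≡ (logistic μ)^[n] x + μ ^ n * (y - x) [ZMOD q ^ (w + 2)] :=
          iterate_logistic_modEq_of_pow_dvd_sub hw hx hsum hy
      _ ≡ x + k * q ^ w + μ ^ n * (x + k * q ^ w * S - x) [ZMOD q ^ (w + 2)] := by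
          rw [hFn]; exact ((ih.sub_right x).mul_left _).add_left _
      _ = x + k * q ^ w * ∑ j ∈ range (i + 1), μ ^ (j * n) := by
          rw [sum_range_succ_pow_mul]; ring

theorem logistic_iterate_mul_modEq_general (p : ℕ) (μ : ℕ)
    (n w : ℕ) (hw : 2 ≤ w) (x k : ℤ) (hx : (p : ℤ) ∣ x)
    (hsum : (p : ℤ) ∣ ∑ j ∈ Finset.range n, (μ : ℤ) ^ j)
    (hFn : (fun y : ℤ => (μ : ℤ) * y * (y + 1))^[n] x = x + k * (p : ℤ) ^ w) :
    ∀ i : ℕ, 1 ≤ i →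
      (fun y : ℤ => (μ : ℤ) * y * (y + 1))^[i * n] x ≡
        x + k * (p : ℤ) ^ w * ∑ j ∈ Finset.range i, (μ : ℤ) ^ (j * n)
          [ZMOD (p : ℤ) ^ (w + 2)] :=
  fun i _ => iterate_mul_logistic_modEq hw hx hsum hFn i

/-- Property 4: Let `p` be prime, `μ` a positive integer, `F(x) = μ·x·(x+1)` on `ℤ`,
`n ≥ 1`, `w ≥ 2`, `p ∣ x`, `p ∣ ∑_{j=0}^{n-1} μ^j`, and `F^[n](x) = x + k·p^w` with
`p ∤ k`. Then for every `i ≥ 1`,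
`F^[i·n](x) ≡ x + k·p^w·(∑_{j=0}^{i-1} μ^{j·n}) (mod p^{w+2})`. -/
theorem logistic_iterate_mul_modEq (p : ℕ) (hp : p.Prime) (μ : ℕ) (hμ : 0 < μ)
    (n w : ℕ) (hn : 1 ≤ n) (hw : 2 ≤ w) (x k : ℤ) (hx : (p : ℤ) ∣ x)
    (hsum : (p : ℤ) ∣ ∑ j ∈ Finset.range n, (μ : ℤ) ^ j)
    (hk : ¬ (p : ℤ) ∣ k)
    (hFn : (fun y : ℤ => (μ : ℤ) * y * (y + 1))^[n] x = x + k * (p : ℤ) ^ w) :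
    ∀ i : ℕ, 1 ≤ i →
      (fun y : ℤ => (μ : ℤ) * y * (y + 1))^[i * n] x ≡
        x + k * (p : ℤ) ^ w * ∑ j ∈ Finset.range i, (μ : ℤ) ^ (j * n)
          [ZMOD (p : ℤ) ^ (w + 2)] :=
  logistic_iterate_mul_modEq_general p μ n w hw x k hx hsum hFn
end

section
/- Let n ≥ 1 and let μ be an integer not divisible by 3. Define f : ZMod(3^n) → ZMod(3^n) by f(x) = μ·x·(x+1). Then every x₀ ∈ ZMod(3^n) with 3 dividing x₀ is a periodic point of f, i.e., there exists L ≥ 1 such that f^[L](x₀) = x₀. -/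
lemma zmod3pow_dvd_iff (n : ℕ) (hn : 1 ≤ n) (a : ZMod (3 ^ n)) :
    (3 : ZMod (3 ^ n)) ∣ a ↔ 3 ∣ a.val := by
  have hne : NeZero (3 ^ n) := ⟨by positivity⟩
  constructor
  · rintro ⟨b, rfl⟩
    have h1 : ((3 : ℕ) : ZMod (3 ^ n)) = (3 : ZMod (3 ^ n)) := by push_cast; ring
    rw [← h1, ZMod.val_mul, ZMod.val_natCast]
    have h3 : (3 : ℕ) ∣ 3 ^ n := dvd_pow_self 3 (by omega)
    rw [Nat.dvd_mod_iff h3]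
    exact Dvd.dvd.mul_right (Nat.dvd_mod_iff h3 |>.mpr (dvd_refl 3)) _
  · rintro ⟨c, hc⟩
    refine ⟨(c : ZMod (3 ^ n)), ?_⟩
    have := ZMod.natCast_rightInverse (n := 3 ^ n) a
    rw [← this, hc]
    push_cast
    ring

lemma zmod3pow_isUnit (n : ℕ) (hn : 1 ≤ n) (a : ZMod (3 ^ n))
    (h : ¬ 3 ∣ a.val) : IsUnit a := by
  have hne : NeZero (3 ^ n) := ⟨by positivity⟩
  have ha : ((a.val : ℕ) : ZMod (3 ^ n)) = a := ZMod.natCast_rightInverse a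
  rw [← ha]
  rw [ZMod.isUnit_iff_coprime]
  exact Nat.Coprime.pow_right n
    (((Nat.Prime.coprime_iff_not_dvd Nat.prime_three).mpr h).symm)

/-- Part of Property 5: for `n ≥ 1` and `μ` an integer not divisible by 3,
every `x₀ ∈ ZMod (3^n)` divisible by 3 is a periodic point of
`f(x) = μ·x·(x+1)`. -/
theorem logistic_periodic_of_three_dvd (n : ℕ) (hn : 1 ≤ n) (μ : ℤ) (hμ : ¬ (3 : ℤ) ∣ μ) :
    ∀ x₀ : ZMod (3 ^ n), (3 : ZMod (3 ^ n)) ∣ x₀ →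
      ∃ L : ℕ, 1 ≤ L ∧ (fun x : ZMod (3 ^ n) => (μ : ZMod (3 ^ n)) * x * (x + 1))^[L] x₀ = x₀ := by
  intro x₀ hx₀
  have hne : NeZero (3 ^ n) := ⟨by positivity⟩
  set f : ZMod (3 ^ n) → ZMod (3 ^ n) := fun x => (μ : ZMod (3 ^ n)) * x * (x + 1) with hf
  -- μ is a unit
  have h3 : (3 : ℕ) ∣ 3 ^ n := dvd_pow_self 3 (by omega)
  have hμu : IsUnit ((μ : ℤ) : ZMod (3 ^ n)) := by
    apply zmod3pow_isUnit n hn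
    intro hdvd
    have hd : (3 : ZMod (3 ^ n)) ∣ ((μ : ℤ) : ZMod (3 ^ n)) :=
      (zmod3pow_dvd_iff n hn _).mpr hdvd
    obtain ⟨c, hc⟩ := hd
    have h := congrArg (ZMod.castHom h3 (ZMod 3)) hc
    rw [map_intCast, map_mul, map_ofNat] at h
    have h0 : (3 : ZMod 3) = 0 := by decide
    rw [h0, zero_mul] at h
    have : ((μ : ℤ) : ZMod 3) = 0 := h
    exact hμ ((ZMod.intCast_zmod_eq_zero_iff_dvd μ 3).mp this)
  -- f preserves multiples of 3
  have hS : ∀ a : ZMod (3 ^ n), (3 : ZMod (3 ^ n)) ∣ a → (3 : ZMod (3 ^ n)) ∣ f a := by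
    rintro a ⟨c, rfl⟩
    exact ⟨(μ : ZMod (3 ^ n)) * c * (3 * c + 1), by simp only [hf]; ring⟩
  have hSk : ∀ k : ℕ, (3 : ZMod (3 ^ n)) ∣ f^[k] x₀ := by
    intro k
    induction k with
    | zero => simpa using hx₀
    | succ k ih => rw [Function.iterate_succ_apply']; exact hS _ ih
  -- f is injective on multiples of 3
  have hinj : ∀ a b : ZMod (3 ^ n), (3 : ZMod (3 ^ n)) ∣ a → (3 : ZMod (3 ^ n)) ∣ b →
      f a = f b → a = b := by
    intro a b ha hb hab
    have h1 : (μ : ZMod (3 ^ n)) * (a * (a + 1) - b * (b + 1)) = 0 := by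
      have : (μ : ZMod (3 ^ n)) * a * (a + 1) = (μ : ZMod (3 ^ n)) * b * (b + 1) := hab
      linear_combination this
    have h2 : a * (a + 1) - b * (b + 1) = 0 := (IsUnit.mul_right_eq_zero hμu).mp h1
    have h3' : (a - b) * (a + b + 1) = 0 := by linear_combination h2
    have hu2 : IsUnit (a + b + 1) := by
      apply zmod3pow_isUnit n hn
      intro hdvd
      have : (3 : ZMod (3 ^ n)) ∣ a + b + 1 := (zmod3pow_dvd_iff n hn _).mpr hdvd
      have h1d : (3 : ZMod (3 ^ n)) ∣ 1 := by
        have := dvd_sub this (dvd_add ha hb)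
        simpa using this
      have := (zmod3pow_dvd_iff n hn 1).mp h1d
      rw [ZMod.val_one_eq_one_mod] at this
      have h1lt : (1 : ℕ) % 3 ^ n = 1 := Nat.mod_eq_of_lt (by
        calc 1 < 3 := by norm_num
        _ ≤ 3 ^ n := Nat.le_self_pow (by omega) 3)
      omega
    have := (IsUnit.mul_left_eq_zero hu2).mp h3'
    linear_combination this
  -- pigeonhole
  obtain ⟨i, j, hij, heq⟩ := Finite.exists_ne_map_eq_of_infinite (fun k : ℕ => f^[k] x₀)
  wlog hlt : i < j generalizing i j
  · exact this j i hij.symm heq.symm (by omega)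
  have hcancel : ∀ m : ℕ, ∀ a b : ZMod (3 ^ n), (3 : ZMod (3 ^ n)) ∣ a →
      (3 : ZMod (3 ^ n)) ∣ b → f^[m] a = f^[m] b → a = b := by
    intro m
    induction m with
    | zero => intro a b _ _ h; simpa using h
    | succ m ih =>
      intro a b ha hb h
      rw [Function.iterate_succ_apply, Function.iterate_succ_apply] at h
      exact hinj a b ha hb (ih (f a) (f b) (hS a ha) (hS b hb) h)
  refine ⟨j - i, by omega, ?_⟩
  have hiter : f^[i] (f^[j - i] x₀) = f^[i] x₀ := by
    rw [← Function.iterate_add_apply]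
    have : i + (j - i) = j := by omega
    rw [Nat.add_sub_cancel' (le_of_lt hlt)]
    exact heq.symm
  exact hcancel i (f^[j - i] x₀) x₀ (hSk _) hx₀ hiter
end

section
/- Let n ≥ 1 and let μ be an integer with μ ≡ 1 (mod 3). Define f : ZMod(3^n) → ZMod(3^n) by f(x) = μ·x·(x+1). Then x₀ ∈ ZMod(3^n) is a periodic point of f if and only if 3 divides x₀. Moreover, if x₀ ≡ 2 (mod 3) then f(x₀) is a multiple of 3 (pre-period 1), and if x₀ ≡ 1 (mod 3) then f(x₀) ≡ 2 (mod 3) and f^[2](x₀) is a multiple of 3 (pre-period 2). -/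
/-- Property 5 (case `μ ≡ 1 mod 3`): for `f(x) = μ·x·(x+1)` on `ZMod (3^n)`,
a point `x₀` is periodic iff `3 ∣ x₀`; moreover if `x₀ ≡ 2 (mod 3)` then `f(x₀)` is
a multiple of 3 (pre-period 1), and if `x₀ ≡ 1 (mod 3)` then `f(x₀) ≡ 2 (mod 3)` and
`f^[2](x₀)` is a multiple of 3 (pre-period 2). -/
theorem logistic_periodic_iff_three_dvd (n : ℕ) (hn : 1 ≤ n) (μ : ℤ) (hμ : μ % 3 = 1) :
    ∀ x₀ : ZMod (3 ^ n),
      ((∃ L : ℕ, 1 ≤ L ∧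
          (fun x : ZMod (3 ^ n) => (μ : ZMod (3 ^ n)) * x * (x + 1))^[L] x₀ = x₀) ↔
        (3 : ZMod (3 ^ n)) ∣ x₀) ∧
      (x₀.val % 3 = 2 → (3 : ZMod (3 ^ n)) ∣ (μ : ZMod (3 ^ n)) * x₀ * (x₀ + 1)) ∧
      (x₀.val % 3 = 1 →
        ((μ : ZMod (3 ^ n)) * x₀ * (x₀ + 1)).val % 3 = 2 ∧
        (3 : ZMod (3 ^ n)) ∣
          (fun x : ZMod (3 ^ n) => (μ : ZMod (3 ^ n)) * x * (x + 1))^[2] x₀) := by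
  have hN3 : (3:ℕ) ∣ 3 ^ n := dvd_pow_self 3 (by omega)
  haveI : NeZero (3 ^ n) := ⟨by positivity⟩
  set f : ZMod (3 ^ n) → ZMod (3 ^ n) := fun x => (μ : ZMod (3 ^ n)) * x * (x + 1) with hfdef
  let π : ZMod (3 ^ n) →+* ZMod 3 := ZMod.castHom hN3 (ZMod 3)
  -- π in terms of val
  have hπval : ∀ y : ZMod (3 ^ n), (π y).val = y.val % 3 := by
    intro y
    have : π y = ((y.val : ℕ) : ZMod 3) := by
      conv_lhs => rw [show y = ((y.val : ℕ) : ZMod (3 ^ n)) by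
        rw [ZMod.natCast_val, ZMod.cast_id]]
      simp [π]
    rw [this, ZMod.val_natCast]
  -- divisibility by 3 in terms of π
  have hdvd : ∀ y : ZMod (3 ^ n), (3 : ZMod (3 ^ n)) ∣ y ↔ π y = 0 := by
    intro y
    have h3 : π (3 : ZMod (3 ^ n)) = 0 := by
      rw [show (3 : ZMod (3 ^ n)) = ((3 : ℕ) : ZMod (3 ^ n)) by norm_num, map_natCast]
      decide
    constructor
    · rintro ⟨t, rfl⟩
      rw [map_mul, h3, zero_mul]
    · intro h
      have hv : y.val % 3 = 0 := by rw [← hπval]; simp [h]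
      obtain ⟨k, hk⟩ := Nat.dvd_of_mod_eq_zero hv
      refine ⟨(k : ZMod (3 ^ n)), ?_⟩
      have : y = ((y.val : ℕ) : ZMod (3 ^ n)) := by rw [ZMod.natCast_val, ZMod.cast_id]
      rw [this, hk]
      push_cast
      ring
  have hπμ : π ((μ : ZMod (3 ^ n))) = 1 := by
    rw [map_intCast]
    rw [show (1 : ZMod 3) = ((1 : ℤ) : ZMod 3) by norm_num, ZMod.intCast_eq_intCast_iff]
    show μ % 3 = 1 % 3
    omega
  have hπf : ∀ x, π (f x) = π x * (π x + 1) := by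
    intro x
    simp only [hfdef, map_mul, map_add, map_one]
    rw [hπμ]
    ring
  -- units
  have hunit : ∀ y : ZMod (3 ^ n), π y ≠ 0 → IsUnit y := by
    intro y hy
    have hv : ¬ (3 ∣ y.val) := by
      intro h
      apply hy
      have : (π y).val = 0 := by rw [hπval]; omega
      exact (ZMod.val_eq_zero _).mp this
    have : y = ((y.val : ℕ) : ZMod (3 ^ n)) := by rw [ZMod.natCast_val, ZMod.cast_id]
    rw [this, ZMod.isUnit_iff_coprime]
    exact Nat.Coprime.pow_right _
      (Nat.Coprime.symm ((Nat.Prime.coprime_iff_not_dvd (by norm_num)).mpr hv))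
  have hμunit : IsUnit (μ : ZMod (3 ^ n)) := hunit _ (by rw [hπμ]; norm_num)
  -- injectivity on multiples of 3
  have hinj : ∀ a b : ZMod (3 ^ n), (3 : ZMod (3^n)) ∣ a → (3 : ZMod (3^n)) ∣ b →
      f a = f b → a = b := by
    intro a b ha hb hab
    have h1 : (μ : ZMod (3^n)) * ((a - b) * (a + b + 1)) = 0 := by
      have : f a - f b = 0 := sub_eq_zero.mpr hab
      calc (μ : ZMod (3^n)) * ((a - b) * (a + b + 1)) = f a - f b := by simp [hfdef]; ring
        _ = 0 := this
    have h2 : (a - b) * (a + b + 1) = 0 := by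
      rcases hμunit with ⟨u, hu⟩
      rwa [← hu, Units.mul_right_eq_zero] at h1
    have hu2 : IsUnit (a + b + 1) := by
      apply hunit
      rw [map_add, map_add, map_one, (hdvd a).mp ha, (hdvd b).mp hb]
      norm_num
    have h3 : a - b = 0 := by
      rcases hu2 with ⟨u, hu⟩
      rwa [← hu, Units.mul_left_eq_zero] at h2
    exact sub_eq_zero.mp h3
  -- 3 ∣ x → 3 ∣ f x
  have hstep : ∀ x : ZMod (3 ^ n), (3 : ZMod (3^n)) ∣ x → (3 : ZMod (3^n)) ∣ f x := by
    intro x hx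
    rw [hdvd] at hx ⊢
    rw [hπf, hx]
    ring
  intro x₀
  have hiterπ : ∀ (k : ℕ) (x : ZMod (3 ^ n)),
      π (f^[k] x) = (fun z : ZMod 3 => z * (z + 1))^[k] (π x) := by
    intro k
    induction k with
    | zero => simp
    | succ m ih =>
      intro x
      rw [Function.iterate_succ_apply, Function.iterate_succ_apply, ih, hπf]
  constructor
  · constructor
    · -- periodic → 3 ∣ x₀
      rintro ⟨L, hL1, hL⟩
      rw [hdvd]
      set g : ZMod 3 → ZMod 3 := fun z => z * (z + 1) with hg
      have h0 : ∀ k, g^[k] (0 : ZMod 3) = 0 := by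
        intro k
        induction k with
        | zero => rfl
        | succ m ih => rw [Function.iterate_succ_apply, show g 0 = 0 by simp [hg], ih]
      have h2 : ∀ L, 1 ≤ L → g^[L] (2 : ZMod 3) = 0 := by
        intro L hL
        obtain ⟨m, rfl⟩ := Nat.exists_eq_add_of_le hL
        rw [Nat.add_comm, Function.iterate_add_apply, Function.iterate_one,
          show g 2 = 0 by decide, h0]
      have hgL : g^[L] (π x₀) = π x₀ := by
        rw [← hiterπ, hL]
      have hcases : ∀ z : ZMod 3, z = 0 ∨ z = 1 ∨ z = 2 := by decide
      rcases hcases (π x₀) with h | h | h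
      · exact h
      · exfalso
        rw [h] at hgL
        obtain ⟨m, rfl⟩ := Nat.exists_eq_add_of_le hL1
        rw [Nat.add_comm, Function.iterate_add_apply, Function.iterate_one,
          show g 1 = 2 by decide] at hgL
        rcases Nat.eq_zero_or_pos m with rfl | hm
        · simp only [Function.iterate_zero, id_eq] at hgL
          exact absurd hgL (by decide)
        · rw [h2 m hm] at hgL
          exact absurd hgL (by decide)
      · exfalso
        rw [h, h2 L hL1] at hgL
        exact absurd hgL (by decide)
    · -- 3 ∣ x₀ → periodic
      intro hx₀
      have hiter : ∀ k, (3 : ZMod (3^n)) ∣ f^[k] x₀ := by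
        intro k
        induction k with
        | zero => exact hx₀
        | succ m ih => rw [Function.iterate_succ_apply']; exact hstep _ ih
      have hcancel : ∀ (k : ℕ) (a b : ZMod (3 ^ n)), (3:ZMod (3^n)) ∣ a → (3:ZMod (3^n)) ∣ b →
          f^[k] a = f^[k] b → a = b := by
        intro k
        induction k with
        | zero => intro a b _ _ h; exact h
        | succ m ih =>
          intro a b ha hb h
          rw [Function.iterate_succ_apply, Function.iterate_succ_apply] at h
          exact hinj a b ha hb (ih (f a) (f b) (hstep a ha) (hstep b hb) h)
      have key : ∀ i j : ℕ, i < j → f^[i] x₀ = f^[j] x₀ →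
          ∃ L, 1 ≤ L ∧ f^[L] x₀ = x₀ := by
        intro i j hlt he
        obtain ⟨d, rfl⟩ := Nat.exists_eq_add_of_lt hlt
        refine ⟨d + 1, by omega, ?_⟩
        have he2 : f^[i] x₀ = f^[i] (f^[d+1] x₀) := by
          rw [← Function.iterate_add_apply]
          have h' : i + (d + 1) = i + d + 1 := by omega
          rw [h']
          exact he
        exact (hcancel i _ _ hx₀ (hiter _) he2).symm
      obtain ⟨i, j, hij, h⟩ := Finite.exists_ne_map_eq_of_infinite (fun i : ℕ => f^[i] x₀)
      rcases hij.lt_or_gt with hlt | hlt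
      · exact key i j hlt h
      · exact key j i hlt h.symm
  · constructor
    · -- x₀ ≡ 2 mod 3
      intro h2
      have : π x₀ = 2 := by
        have : (π x₀).val = 2 := by rw [hπval]; exact h2
        revert this
        have hcases : ∀ z : ZMod 3, z.val = 2 → z = 2 := by decide
        exact hcases _
      rw [hdvd, hπf, this]
      decide
    · -- x₀ ≡ 1 mod 3
      intro h1
      have hπ1 : π x₀ = 1 := by
        have : (π x₀).val = 1 := by rw [hπval]; exact h1
        revert this
        have hcases : ∀ z : ZMod 3, z.val = 1 → z = 1 := by decide
        exact hcases _
      have hf1 : π (f x₀) = 2 := by rw [hπf, hπ1]; decide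
      constructor
      · rw [← hπval, show π ((μ : ZMod (3^n)) * x₀ * (x₀ + 1)) = π (f x₀) from rfl, hf1]
        decide
      · rw [hdvd]
        show π (f (f x₀)) = 0
        rw [hπf, hf1]
        decide
end

section
/- Let μ be a positive integer with μ mod 3 ∈ {1, 2}, write μ̄ = μ mod 3, and define F : ℤ → ℤ by F(x) = μ·x·(x+1). Suppose x is an integer divisible by 3 and w ≥ 2 satisfies F^[μ̄](x) ≡ x (mod 3^w) and F^[μ̄](x) ≢ x (mod 3^{w+1}). Then for every t ≥ 1, F^[μ̄·3^t](x) ≡ x (mod 3^{w+t}) and F^[μ̄·3^t](x) ≢ x (mod 3^{w+t+1}). -/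
namespace LPG

/-- The logistic map. -/
def F (μ : ℕ) : ℤ → ℤ := fun y => (μ : ℤ) * y * (y + 1)

/-- The multiplier product: `F^[m] a - F^[m] b = (a - b) * C μ m a b`. -/
def C (μ m : ℕ) (a b : ℤ) : ℤ :=
  ∏ i ∈ Finset.range m, ((μ : ℤ) * ((F μ)^[i] a + (F μ)^[i] b + 1))

lemma diff_eq (μ m : ℕ) (a b : ℤ) :
    (F μ)^[m] a - (F μ)^[m] b = (a - b) * C μ m a b := by
  induction m with
  | zero => simp [C]
  | succ m ih =>
    rw [Function.iterate_succ_apply', Function.iterate_succ_apply',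
      C, Finset.prod_range_succ, ← C]
    have h : F μ ((F μ)^[m] a) - F μ ((F μ)^[m] b)
        = ((F μ)^[m] a - (F μ)^[m] b) * ((μ:ℤ) * ((F μ)^[m] a + (F μ)^[m] b + 1)) := by
      simp only [F]; ring
    rw [h, ih]; ring

lemma dvd_iter_sub (μ m : ℕ) (g a b : ℤ) (h : g ∣ a - b) :
    g ∣ (F μ)^[m] a - (F μ)^[m] b := by
  rw [diff_eq]; exact h.mul_right _

lemma C_mod (μ m : ℕ) (g a b a' b' : ℤ) (ha : g ∣ a - a') (hb : g ∣ b - b') :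
    g ∣ C μ m a b - C μ m a' b' := by
  induction m with
  | zero => simp [C]
  | succ m ih =>
    rw [C, C, Finset.prod_range_succ, Finset.prod_range_succ, ← C, ← C]
    have hf : g ∣ ((μ:ℤ) * ((F μ)^[m] a + (F μ)^[m] b + 1))
        - ((μ:ℤ) * ((F μ)^[m] a' + (F μ)^[m] b' + 1)) := by
      have h1 := dvd_iter_sub μ m g a a' ha
      have h2 := dvd_iter_sub μ m g b b' hb
      have heq : ((μ:ℤ) * ((F μ)^[m] a + (F μ)^[m] b + 1))
          - ((μ:ℤ) * ((F μ)^[m] a' + (F μ)^[m] b' + 1))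
          = (μ:ℤ) * (((F μ)^[m] a - (F μ)^[m] a') + ((F μ)^[m] b - (F μ)^[m] b')) := by ring
      rw [heq]
      exact (dvd_add h1 h2).mul_left _
    calc g ∣ (C μ m a b - C μ m a' b') * ((μ:ℤ) * ((F μ)^[m] a + (F μ)^[m] b + 1))
          + C μ m a' b' * (((μ:ℤ) * ((F μ)^[m] a + (F μ)^[m] b + 1))
            - ((μ:ℤ) * ((F μ)^[m] a' + (F μ)^[m] b' + 1))) :=
        dvd_add (ih.mul_right _) (hf.mul_left _)
      _ = C μ m a b * ((μ:ℤ) * ((F μ)^[m] a + (F μ)^[m] b + 1))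
          - C μ m a' b' * ((μ:ℤ) * ((F μ)^[m] a' + (F μ)^[m] b' + 1)) := by ring

lemma orbit3 (μ : ℕ) (a : ℤ) (ha : (3:ℤ) ∣ a) (i : ℕ) : (3:ℤ) ∣ (F μ)^[i] a := by
  induction i with
  | zero => exact ha
  | succ i ih =>
    rw [Function.iterate_succ_apply']
    show (3:ℤ) ∣ (μ:ℤ) * (F μ)^[i] a * ((F μ)^[i] a + 1)
    exact (ih.mul_left _).mul_right _

lemma C_mod3 (μ m : ℕ) (a b : ℤ) (ha : (3:ℤ) ∣ a) (hb : (3:ℤ) ∣ b) :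
    (3:ℤ) ∣ C μ m a b - (μ:ℤ)^m := by
  induction m with
  | zero => simp [C]
  | succ m ih =>
    rw [C, Finset.prod_range_succ, ← C, pow_succ]
    have hf : (3:ℤ) ∣ ((μ:ℤ) * ((F μ)^[m] a + (F μ)^[m] b + 1)) - (μ:ℤ) := by
      have heq : ((μ:ℤ) * ((F μ)^[m] a + (F μ)^[m] b + 1)) - (μ:ℤ)
          = (μ:ℤ) * ((F μ)^[m] a + (F μ)^[m] b) := by ring
      rw [heq]
      exact ((orbit3 μ a ha m).add (orbit3 μ b hb m)).mul_left _
    calc (3:ℤ) ∣ (C μ m a b - (μ:ℤ)^m) * ((μ:ℤ) * ((F μ)^[m] a + (F μ)^[m] b + 1))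
        + (μ:ℤ)^m * (((μ:ℤ) * ((F μ)^[m] a + (F μ)^[m] b + 1)) - (μ:ℤ)) :=
        dvd_add (ih.mul_right _) (hf.mul_left _)
      _ = C μ m a b * ((μ:ℤ) * ((F μ)^[m] a + (F μ)^[m] b + 1)) - (μ:ℤ)^m * (μ:ℤ) := by ring

lemma step (μ m : ℕ) (hm : (3:ℤ) ∣ (μ:ℤ)^m - 1) (x : ℤ) (hx : (3:ℤ) ∣ x)
    (w : ℕ) (hw : 2 ≤ w) (D : ℤ) (hD : (F μ)^[m] x - x = 3^w * D) (hD3 : ¬ (3:ℤ) ∣ D) :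
    ∃ D' : ℤ, (F μ)^[3*m] x - x = 3^(w+1) * D' ∧ ¬ (3:ℤ) ∣ D' := by
  set x1 := (F μ)^[m] x with hx1
  set x2 := (F μ)^[m] x1 with hx2
  set x3 := (F μ)^[m] x2 with hx3
  have h3m : (F μ)^[3*m] x = x3 := by
    rw [show 3*m = m + (m + m) by ring, Function.iterate_add_apply, Function.iterate_add_apply]
  set d : ℤ := 3^w * D with hd
  have e1 : x1 - x = d := hD
  set u := C μ m x1 x with hu
  set v := C μ m x2 x1 with hv
  set c := C μ m x x with hc
  have e2 : x2 - x1 = d * u := by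
    have h := diff_eq μ m x1 x
    rw [e1] at h
    exact h
  have e3 : x3 - x2 = d * u * v := by
    have h := diff_eq μ m x2 x1
    rw [e2] at h
    rw [h]
  have etot : x3 - x = d * (1 + u + u * v) := by linarith
  have h9d : (9:ℤ) ∣ d := by
    have h1 : (3:ℤ)^2 ∣ 3^w := pow_dvd_pow 3 hw
    have h2 : (9:ℤ) ∣ 3^w := by norm_num at h1 ⊢; exact h1
    exact h2.mul_right D
  have hu9 : (9:ℤ) ∣ u - c := by
    apply C_mod
    · rw [e1]; exact h9d
    · simp
  have hv9 : (9:ℤ) ∣ v - c := by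
    apply C_mod
    · have heq : x2 - x = d * u + d := by linarith
      rw [heq]
      exact dvd_add (h9d.mul_right u) h9d
    · rw [e1]; exact h9d
  have hc1 : (3:ℤ) ∣ c - 1 := by
    have h1 := C_mod3 μ m x x hx hx
    have heq : c - 1 = (c - (μ:ℤ)^m) + ((μ:ℤ)^m - 1) := by ring
    rw [heq]
    exact dvd_add h1 hm
  obtain ⟨s, hs⟩ := hc1
  obtain ⟨p, hp⟩ := hu9
  obtain ⟨q, hq⟩ := hv9
  have hcs : c = 1 + 3 * s := by linarith
  have hup : u = c + 9 * p := by linarith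
  have hvq : v = c + 9 * q := by linarith
  set K : ℤ := s + s^2 + p + c*q + p*c + 9*p*q with hK
  have key : 1 + u + u * v = 3 * (1 + 3 * K) := by
    rw [hK, hup, hvq, hcs]; ring
  refine ⟨D * (1 + 3 * K), ?_, ?_⟩
  · rw [h3m, etot, key, hd, pow_succ]; ring
  · intro h
    rcases Int.prime_three.dvd_mul.mp h with h' | h'
    · exact hD3 h'
    · omega

end LPG

/-- Lemma 1: For a positive integer `μ` with `μ mod 3 ∈ {1,2}`, `F(x) = μ·x·(x+1)`,
`3 ∣ x` and `w ≥ 2`, if `F^[μ̄](x) ≡ x (mod 3^w)` but `F^[μ̄](x) ≢ x (mod 3^{w+1})`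
(where `μ̄ = μ mod 3`), then for every `t ≥ 1`, `F^[μ̄·3^t](x) ≡ x (mod 3^{w+t})`
and `F^[μ̄·3^t](x) ≢ x (mod 3^{w+t+1})`. -/
theorem logistic_period_growth (μ : ℕ) (hμ : 0 < μ) (hμ3 : μ % 3 = 1 ∨ μ % 3 = 2)
    (x : ℤ) (hx : (3 : ℤ) ∣ x) (w : ℕ) (hw : 2 ≤ w)
    (h1 : (fun y : ℤ => (μ : ℤ) * y * (y + 1))^[μ % 3] x ≡ x [ZMOD (3 : ℤ) ^ w])
    (h2 : ¬ (fun y : ℤ => (μ : ℤ) * y * (y + 1))^[μ % 3] x ≡ x [ZMOD (3 : ℤ) ^ (w + 1)]) :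
    ∀ t : ℕ, 1 ≤ t →
      (fun y : ℤ => (μ : ℤ) * y * (y + 1))^[(μ % 3) * 3 ^ t] x ≡ x
        [ZMOD (3 : ℤ) ^ (w + t)] ∧
      ¬ (fun y : ℤ => (μ : ℤ) * y * (y + 1))^[(μ % 3) * 3 ^ t] x ≡ x
        [ZMOD (3 : ℤ) ^ (w + t + 1)] := by
  have hF : (fun y : ℤ => (μ : ℤ) * y * (y + 1)) = LPG.F μ := rfl
  rw [hF] at h1 h2 ⊢
  have hm : ∀ t : ℕ, (3:ℤ) ∣ (μ:ℤ)^((μ % 3) * 3^t) - 1 := by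
    intro t
    rcases hμ3 with h | h
    · have hμ1 : (3:ℤ) ∣ (μ:ℤ) - 1 := ⟨(μ / 3 : ℕ), by push_cast; omega⟩
      calc (3:ℤ) ∣ (μ:ℤ) - 1 := hμ1
        _ ∣ (μ:ℤ)^((μ % 3) * 3^t) - 1^((μ % 3) * 3^t) := sub_dvd_pow_sub_pow _ _ _
        _ = (μ:ℤ)^((μ % 3) * 3^t) - 1 := by rw [one_pow]
    · have hμ1 : (3:ℤ) ∣ (μ:ℤ)^2 - 1 := by
        obtain ⟨k, hk⟩ : ∃ k : ℕ, μ = 3 * k + 2 := ⟨μ / 3, by omega⟩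
        refine ⟨3*(k:ℤ)^2 + 4*k + 1, ?_⟩
        rw [hk]; push_cast; ring
      have hrw : (μ:ℤ)^((μ % 3) * 3^t) = ((μ:ℤ)^2)^(3^t) := by
        rw [h, pow_mul]
      rw [hrw]
      calc (3:ℤ) ∣ (μ:ℤ)^2 - 1 := hμ1
        _ ∣ ((μ:ℤ)^2)^(3^t) - 1^(3^t) := sub_dvd_pow_sub_pow _ _ _
        _ = ((μ:ℤ)^2)^(3^t) - 1 := by rw [one_pow]
  have H : ∀ t : ℕ, ∃ D : ℤ, (LPG.F μ)^[(μ % 3) * 3^t] x - x = 3^(w+t) * D ∧ ¬ (3:ℤ) ∣ D := by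
    intro t
    induction t with
    | zero =>
      have hd : (3:ℤ)^w ∣ (LPG.F μ)^[μ % 3] x - x := by
        have h' := Int.ModEq.dvd h1
        have h'' := dvd_neg.mpr h'
        rwa [neg_sub] at h''
      obtain ⟨D, hDe⟩ := hd
      refine ⟨D, by simpa using hDe, ?_⟩
      intro h3D
      apply h2
      have hdvd : (3:ℤ)^(w+1) ∣ (LPG.F μ)^[μ % 3] x - x := by
        obtain ⟨E, hE⟩ := h3D
        exact ⟨E, by rw [hDe, hE, pow_succ]; ring⟩
      have h' := dvd_neg.mpr hdvd
      rw [neg_sub] at h'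
      exact Int.modEq_iff_dvd.mpr h'
    | succ t ih =>
      obtain ⟨D, hDe, hD3⟩ := ih
      obtain ⟨D', hD'e, hD'3⟩ := LPG.step μ ((μ % 3) * 3^t) (hm t) x hx (w+t) (by omega) D hDe hD3
      refine ⟨D', ?_, hD'3⟩
      have hcount : 3 * ((μ % 3) * 3^t) = (μ % 3) * 3^(t+1) := by ring
      rw [← hcount]
      have hexp : w + (t+1) = (w + t) + 1 := by ring
      rw [hexp]
      exact hD'e
  intro t ht
  obtain ⟨D, hDe, hD3⟩ := H t
  constructor
  · exact Int.modEq_iff_dvd.mpr ⟨-D, by rw [mul_neg, ← hDe]; ring⟩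
  · intro h
    apply hD3
    have hdvd : (3:ℤ)^(w+t+1) ∣ (LPG.F μ)^[(μ%3)*3^t] x - x := by
      have h' := Int.ModEq.dvd h
      have h'' := dvd_neg.mpr h'
      rwa [neg_sub] at h''
    have h3 : (3:ℤ)^(w+t) * 3 ∣ 3^(w+t) * D := by
      rw [← hDe, ← pow_succ]
      exact hdvd
    exact (mul_dvd_mul_iff_left (pow_ne_zero (w+t) (by norm_num : (3:ℤ) ≠ 0))).mp h3
end

section
/- Let μ be a positive integer with μ ≡ 1 (mod 3) and define F : ℤ → ℤ by F(x) = μ·x·(x+1). Suppose x is an integer divisible by 3, w ≥ 2, and F(x) = x + k·3^w for some integer k. Then F^[3](x) ≡ x + (1 + μ + μ²)·k·3^w (mod 3^{w+2}); consequently, since (1 + μ + μ²) ≡ 3 (mod 9), one has F^[3](x) ≡ x (mod 3^{w+1}) and, if 3 does not divide k, F^[3](x) ≢ x (mod 3^{w+2}). -/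
/-- Base case `t = 1` in the proof of Lemma 1 (for `μ ≡ 1 mod 3`): if `3 ∣ x`,
`w ≥ 2` and `F(x) = x + k·3^w`, then
`F^[3](x) ≡ x + (1+μ+μ²)·k·3^w (mod 3^{w+2})`; consequently
`F^[3](x) ≡ x (mod 3^{w+1})` and, when `3 ∤ k`, `F^[3](x) ≢ x (mod 3^{w+2})`. -/
theorem logistic_cube_iterate_modEq (μ : ℕ) (hμ : 0 < μ) (hμ3 : μ % 3 = 1)
    (x : ℤ) (hx : (3 : ℤ) ∣ x) (w : ℕ) (hw : 2 ≤ w) (k : ℤ)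
    (hF : (μ : ℤ) * x * (x + 1) = x + k * 3 ^ w) :
    (fun y : ℤ => (μ : ℤ) * y * (y + 1))^[3] x ≡
        x + (1 + (μ : ℤ) + (μ : ℤ) ^ 2) * k * 3 ^ w [ZMOD (3 : ℤ) ^ (w + 2)] ∧
    (fun y : ℤ => (μ : ℤ) * y * (y + 1))^[3] x ≡ x [ZMOD (3 : ℤ) ^ (w + 1)] ∧
    (¬ (3 : ℤ) ∣ k →
      ¬ (fun y : ℤ => (μ : ℤ) * y * (y + 1))^[3] x ≡ x [ZMOD (3 : ℤ) ^ (w + 2)]) := by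
  obtain ⟨y, rfl⟩ := hx
  obtain ⟨m, hm⟩ : ∃ m : ℤ, (μ : ℤ) = 3 * m + 1 := ⟨(μ : ℤ) / 3, by omega⟩
  obtain ⟨v, rfl⟩ : ∃ v, w = v + 2 := ⟨w - 2, by omega⟩
  set c : ℤ := 3 ^ v with hc
  have p2 : (3 : ℤ) ^ (v + 2) = 9 * c := by rw [pow_add]; ring
  have p3 : (3 : ℤ) ^ (v + 2 + 1) = 27 * c := by rw [pow_add, pow_add]; ring
  have p4 : (3 : ℤ) ^ (v + 2 + 2) = 81 * c := by rw [pow_add, pow_add]; ring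
  rw [p2] at hF
  set X : ℤ := 3 * y with hX
  have e1 : (μ : ℤ) * X * (X + 1) = X + 9 * c * k := by linarith [hF]
  have e2 : (μ : ℤ) * (X + 9 * c * k) * (X + 9 * c * k + 1)
      = X + 9 * c * k * (1 + (μ : ℤ) * (2 * X + 1 + 9 * c * k)) := by
    have h : (μ : ℤ) * (X + 9 * c * k) * (X + 9 * c * k + 1)
        = (μ : ℤ) * X * (X + 1) + (μ : ℤ) * (9 * c * k) * (2 * X + 1 + 9 * c * k) := by
      ring
    rw [h, e1]; ring
  set d : ℤ := 9 * c * k * (1 + (μ : ℤ) * (2 * X + 1 + 9 * c * k)) with hd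
  have e3 : (μ : ℤ) * (X + d) * (X + d + 1)
      = X + 9 * c * k + (μ : ℤ) * d * (2 * X + 1 + d) := by
    have h : (μ : ℤ) * (X + d) * (X + d + 1)
        = (μ : ℤ) * X * (X + 1) + (μ : ℤ) * d * (2 * X + 1 + d) := by ring
    rw [h, e1]
  have hit : (fun y : ℤ => (μ : ℤ) * y * (y + 1))^[3] X
      = X + 9 * c * k + (μ : ℤ) * d * (2 * X + 1 + d) := by
    show (μ : ℤ) * ((μ : ℤ) * ((μ : ℤ) * X * (X + 1)) * ((μ : ℤ) * X * (X + 1) + 1))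
        * ((μ : ℤ) * ((μ : ℤ) * X * (X + 1)) * ((μ : ℤ) * X * (X + 1) + 1) + 1)
        = X + 9 * c * k + (μ : ℤ) * d * (2 * X + 1 + d)
    rw [e1, e2, e3]
  have key1 : (fun y : ℤ => (μ : ℤ) * y * (y + 1))^[3] X ≡
      X + (1 + (μ : ℤ) + (μ : ℤ) ^ 2) * k * 3 ^ (v + 2) [ZMOD (3 : ℤ) ^ (v + 2 + 2)] := by
    rw [Int.modEq_iff_dvd, hit, p4, p2, hd, hm, hX]
    exact ⟨-(k * (3 * m + 1)) * (2 * y * (1 + 2 * m + 2 * y + 6 * m * y)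
      + c * k * (3 * m + 1) * (2 * (3 * y) + 1)
      + c * k * (1 + (3 * m + 1) * (2 * (3 * y) + 1 + 9 * c * k)) ^ 2), by ring⟩
  refine ⟨key1, ?_, ?_⟩
  · rw [Int.modEq_iff_dvd, hit, p3, hd, hm, hX]
    exact ⟨-(k * (1 + 3 * m + 3 * m ^ 2)) - 3 * (k * (3 * m + 1) *
      (2 * y * (1 + 2 * m + 2 * y + 6 * m * y)
      + c * k * (3 * m + 1) * (2 * (3 * y) + 1)
      + c * k * (1 + (3 * m + 1) * (2 * (3 * y) + 1 + 9 * c * k)) ^ 2)), by ring⟩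
  · intro hk h
    have h2 : X + (1 + (μ : ℤ) + (μ : ℤ) ^ 2) * k * 3 ^ (v + 2) ≡ X
        [ZMOD (3 : ℤ) ^ (v + 2 + 2)] := key1.symm.trans h
    rw [Int.modEq_iff_dvd, p4, p2] at h2
    obtain ⟨t, ht⟩ := h2
    have hc0 : c ≠ 0 := by positivity
    have h3 : k * (1 + 3 * m + 3 * m ^ 2) = -3 * t := by
      have h27 : 27 * c * (k * (1 + 3 * m + 3 * m ^ 2)) = 27 * c * (-3 * t) := by
        rw [hm] at ht; linear_combination -ht
      exact mul_left_cancel₀ (a := 27 * c) (by simp [hc0]) h27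
    exact hk ⟨-t - k * (m + m ^ 2), by linear_combination h3⟩
end

section
/- Let n ≥ 1, let μ be a positive integer not divisible by 3, and set μ̄ = μ mod 3 ∈ {1, 2}. Define F : ℤ → ℤ by F(x) = μ·x·(x+1) and f : ZMod(3^n) → ZMod(3^n) by f(x) = μ·x·(x+1). Let x₀ be an integer with 0 ≤ x₀ < 3^n and 3 dividing x₀, suppose F^[μ̄](x₀) ≠ x₀, and let v be the 3-adic valuation of F^[μ̄](x₀) − x₀ (i.e., v is the largest t with 3^t dividing F^[μ̄](x₀) − x₀). If n ≥ v, then the minimal period of the point x₀ mod 3^n under f equals μ̄·3^{n−v}. -/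
namespace LogisticAux

def F (c : ℤ) : ℤ → ℤ := fun y => c * y * (y + 1)

def u (c : ℤ) (r : ℕ) (a b : ℤ) : ℤ :=
  ∏ i ∈ Finset.range r, (c * ((F c)^[i] a + (F c)^[i] b + 1))

lemma u_succ (c : ℤ) (r : ℕ) (a b : ℤ) :
    u c (r+1) a b = u c r a b * (c * ((F c)^[r] a + (F c)^[r] b + 1)) :=
  Finset.prod_range_succ _ _

lemma u_zero (c : ℤ) (a b : ℤ) : u c 0 a b = 1 := Finset.prod_range_zero _

lemma iter_sub (c : ℤ) (r : ℕ) (a b : ℤ) :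
    (F c)^[r] a - (F c)^[r] b = (a - b) * u c r a b := by
  induction r with
  | zero => simp [u_zero]
  | succ r ih =>
    rw [Function.iterate_succ_apply', Function.iterate_succ_apply', u_succ]
    have h : F c ((F c)^[r] a) - F c ((F c)^[r] b)
        = ((F c)^[r] a - (F c)^[r] b) * (c * ((F c)^[r] a + (F c)^[r] b + 1)) := by
      simp only [F]; ring
    rw [h, ih]; ring

lemma orbit_dvd (c x : ℤ) (h : 3 ∣ x) (m : ℕ) : 3 ∣ (F c)^[m] x := by
  induction m with
  | zero => simpa
  | succ m ih =>
    rw [Function.iterate_succ_apply']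
    exact Dvd.dvd.mul_right (Dvd.dvd.mul_left ih c) _

lemma u_mod3 (c : ℤ) (r : ℕ) (a b : ℤ) (ha : 3 ∣ a) (hb : 3 ∣ b) :
    (3:ℤ) ∣ u c r a b - c ^ r := by
  induction r with
  | zero => simp [u_zero]
  | succ r ih =>
    rw [u_succ]
    have hA := orbit_dvd c a ha r
    have hB := orbit_dvd c b hb r
    have h : u c r a b * (c * ((F c)^[r] a + (F c)^[r] b + 1)) - c^(r+1)
        = u c r a b * c * ((F c)^[r] a + (F c)^[r] b) + c * (u c r a b - c^r) := by ring
    rw [h]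
    exact dvd_add ((hA.add hB).mul_left _) (ih.mul_left c)

lemma u_mod9 (c : ℤ) (r : ℕ) (a b a' b' : ℤ) (ha : (9:ℤ) ∣ a - a') (hb : (9:ℤ) ∣ b - b') :
    (9:ℤ) ∣ u c r a b - u c r a' b' := by
  induction r with
  | zero => simp [u_zero]
  | succ r ih =>
    rw [u_succ, u_succ]
    have hA : (9:ℤ) ∣ (F c)^[r] a - (F c)^[r] a' := by
      rw [iter_sub]; exact ha.mul_right _
    have hB : (9:ℤ) ∣ (F c)^[r] b - (F c)^[r] b' := by
      rw [iter_sub]; exact hb.mul_right _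
    have key : u c r a b * (c * ((F c)^[r] a + (F c)^[r] b + 1))
        - u c r a' b' * (c * ((F c)^[r] a' + (F c)^[r] b' + 1))
        = u c r a b * c * (((F c)^[r] a - (F c)^[r] a') + ((F c)^[r] b - (F c)^[r] b'))
          + (c * ((F c)^[r] a' + (F c)^[r] b' + 1)) * (u c r a b - u c r a' b') := by ring
    rw [key]
    exact dvd_add ((hA.add hB).mul_left _) (ih.mul_left _)

lemma step (c x₀ : ℤ) (r m : ℕ) :
    (F c)^[r * (m+1)] x₀ - x₀ =
      ((F c)^[r*m] x₀ - x₀) * u c r ((F c)^[r*m] x₀) x₀ + ((F c)^[r] x₀ - x₀) := by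
  have h1 : r * (m+1) = r + r*m := by ring
  rw [h1, Function.iterate_add_apply]
  have h2 := iter_sub c r ((F c)^[r*m] x₀) x₀
  linarith [h2]

lemma pow1 {a : ℤ} (h : (3:ℤ) ∣ a - 1) (t : ℕ) : (3:ℤ) ∣ a ^ t - 1 := by
  induction t with
  | zero => simp
  | succ t ih =>
    have h2 : a^(t+1) - 1 = a^t * (a - 1) + (a^t - 1) := by ring
    rw [h2]; exact dvd_add (h.mul_left _) ih

lemma keyA (c x₀ : ℤ) (h3 : (3:ℤ) ∣ x₀) (r : ℕ) (hc : (3:ℤ) ∣ c^r - 1) (m : ℕ) :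
    ∃ s : ℤ, (F c)^[r*m] x₀ - x₀ = ((F c)^[r] x₀ - x₀) * s ∧ (3:ℤ) ∣ s - (m:ℤ) := by
  induction m with
  | zero => exact ⟨0, by simp, by simp⟩
  | succ m ih =>
    obtain ⟨s, hs, hs3⟩ := ih
    refine ⟨s * u c r ((F c)^[r*m] x₀) x₀ + 1, ?_, ?_⟩
    · rw [step, hs]; ring
    · have hu := u_mod3 c r _ _ (orbit_dvd c x₀ h3 (r*m)) h3
      have h4 : s * u c r ((F c)^[r*m] x₀) x₀ + 1 - ((m:ℤ)+1)
          = s * (u c r ((F c)^[r*m] x₀) x₀ - c^r) + (c^r - 1) * s + (s - (m:ℤ)) := by ring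
      push_cast
      rw [h4]
      exact dvd_add (dvd_add (hu.mul_left s) (hc.mul_right s)) hs3

lemma keyB (c x₀ : ℤ) (h3 : (3:ℤ) ∣ x₀) (r : ℕ) (hc : (3:ℤ) ∣ c^r - 1)
    (h9 : (9:ℤ) ∣ (F c)^[r] x₀ - x₀) :
    ∃ s : ℤ, (F c)^[r*3] x₀ - x₀ = ((F c)^[r] x₀ - x₀) * s ∧ (9:ℤ) ∣ s - 3 := by
  have e1 : (F c)^[r*1] x₀ = (F c)^[r] x₀ := by rw [mul_one]
  have hstep1 := step c x₀ r 1
  have hstep2 := step c x₀ r 2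
  rw [e1] at hstep1
  set X1 := (F c)^[r] x₀ with hX1
  set X2 := (F c)^[r*2] x₀ with hX2
  set lam := u c r x₀ x₀ with hlam
  set U0 := u c r X1 x₀ with hU0
  set U1 := u c r X2 x₀ with hU1
  -- hstep1 : X2 - x₀ = (X1 - x₀) * U0 + (X1 - x₀)
  -- hstep2 : e_{3r} = (X2 - x₀) * U1 + (X1 - x₀)
  have hx1 : (9:ℤ) ∣ X1 - x₀ := h9
  have hx2 : (9:ℤ) ∣ X2 - x₀ := by
    rw [hstep1]; exact dvd_add (h9.mul_right U0) h9
  have hU0l : (9:ℤ) ∣ U0 - lam := u_mod9 c r X1 x₀ x₀ x₀ hx1 (by simp)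
  have hU1l : (9:ℤ) ∣ U1 - lam := u_mod9 c r X2 x₀ x₀ x₀ hx2 (by simp)
  have hl1 : (3:ℤ) ∣ lam - 1 := by
    have h5 := u_mod3 c r x₀ x₀ h3 h3
    have h6 : lam - 1 = (lam - c^r) + (c^r - 1) := by ring
    rw [h6]; exact dvd_add h5 hc
  have hl2 : (3:ℤ) ∣ lam + 2 := by
    have h6 : lam + 2 = (lam - 1) + 3 := by ring
    rw [h6]; exact dvd_add hl1 ⟨1, by ring⟩
  have h99 : (9:ℤ) ∣ (lam - 1) * (lam + 2) := by
    have : (9:ℤ) = 3 * 3 := by norm_num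
    rw [this]; exact mul_dvd_mul hl1 hl2
  refine ⟨U0 * U1 + U1 + 1, ?_, ?_⟩
  · rw [hstep2, hstep1]; ring
  · have h7 : U0 * U1 + U1 + 1 - 3
        = U1 * (U0 - lam) + (lam + 1) * (U1 - lam) + (lam - 1) * (lam + 2) := by ring
    rw [h7]
    exact dvd_add (dvd_add (hU0l.mul_left _) (hU1l.mul_left _)) h99

lemma valn (c x₀ : ℤ) (h3 : (3:ℤ) ∣ x₀) (r₀ : ℕ) (hc : (3:ℤ) ∣ c^r₀ - 1)
    (v : ℕ) (hv : 2 ≤ v) (b : ℤ) (he : (F c)^[r₀] x₀ - x₀ = 3^v * b) (hb : ¬ (3:ℤ) ∣ b) :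
    ∀ k : ℕ, ∃ b' : ℤ, (F c)^[r₀ * 3^k] x₀ - x₀ = 3^(v+k) * b' ∧ ¬ (3:ℤ) ∣ b' := by
  intro k
  induction k with
  | zero => exact ⟨b, by simpa using he, hb⟩
  | succ k ih =>
    obtain ⟨b', he', hb'⟩ := ih
    have hcr : (3:ℤ) ∣ c^(r₀*3^k) - 1 := by rw [pow_mul]; exact pow1 hc _
    have h9 : (9:ℤ) ∣ (F c)^[r₀*3^k] x₀ - x₀ := by
      rw [he']
      have h8 : (9:ℤ) ∣ 3^(v+k) := by
        have h82 : (3:ℤ)^2 ∣ 3^(v+k) := pow_dvd_pow 3 (by omega)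
        simpa using h82
      exact h8.mul_right _
    obtain ⟨s, hs, hs9⟩ := keyB c x₀ h3 (r₀*3^k) hcr h9
    obtain ⟨t, ht⟩ : ∃ t : ℤ, s = 3 + 9*t := by
      obtain ⟨t, ht⟩ := hs9; exact ⟨t, by omega⟩
    refine ⟨b' * (1 + 3*t), ?_, ?_⟩
    · have hexp : r₀ * 3^(k+1) = (r₀ * 3^k) * 3 := by ring
      rw [hexp, hs, he', ht]; ring
    · intro hd
      rcases (Int.prime_three.dvd_mul.mp hd) with h | h
      · exact hb' h
      · omega

lemma valm (c x₀ : ℤ) (h3 : (3:ℤ) ∣ x₀) (r : ℕ) (hc : (3:ℤ) ∣ c^r - 1) (w : ℕ) (b : ℤ)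
    (he : (F c)^[r] x₀ - x₀ = 3^w * b) (hb : ¬ (3:ℤ) ∣ b) (m : ℕ) (hm : ¬ (3:ℤ) ∣ (m:ℤ)) :
    ∃ b' : ℤ, (F c)^[r*m] x₀ - x₀ = 3^w * b' ∧ ¬ (3:ℤ) ∣ b' := by
  obtain ⟨s, hs, hs3⟩ := keyA c x₀ h3 r hc m
  refine ⟨b * s, by rw [hs, he]; ring, ?_⟩
  intro hd
  rcases (Int.prime_three.dvd_mul.mp hd) with h | h
  · exact hb h
  · exact hm (by omega)

lemma mult_form (c x₀ : ℤ) (h3 : (3:ℤ) ∣ x₀) (m : ℕ) :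
    ∃ d : ℤ, (F c)^[m] x₀ = x₀ * d ∧ (3:ℤ) ∣ d - c^m := by
  induction m with
  | zero => exact ⟨1, by simp, by simp⟩
  | succ m ih =>
    obtain ⟨d, hd, hd3⟩ := ih
    refine ⟨d * (c * (x₀ * d + 1)), ?_, ?_⟩
    · rw [Function.iterate_succ_apply', hd]; simp only [F]; ring
    · have h4 : d * (c * (x₀ * d + 1)) - c^(m+1) = (d*d*c) * x₀ + c * (d - c^m) := by ring
      rw [h4]; exact dvd_add (h3.mul_left _) (hd3.mul_left _)

lemma bridge (n : ℕ) (hn : 1 ≤ n) (μ : ℕ) (x₀ : ℤ) (m : ℕ) :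
    ((fun x : ZMod (3^n) => (μ : ZMod (3^n)) * x * (x+1))^[m] (x₀ : ZMod (3^n))
        = (x₀ : ZMod (3^n)))
      ↔ (3:ℤ)^n ∣ (F (μ:ℤ))^[m] x₀ - x₀ := by
  have hcast : ∀ j : ℕ, (((F ((μ:ℕ):ℤ))^[j] x₀ : ℤ) : ZMod (3^n)) =
      (fun x : ZMod (3^n) => (μ : ZMod (3^n)) * x * (x+1))^[j] (x₀ : ZMod (3^n)) := by
    intro j
    induction j with
    | zero => rfl
    | succ j ih =>
      rw [Function.iterate_succ_apply', Function.iterate_succ_apply', ← ih]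
      show (((μ:ℤ) * _ * (_ + 1) : ℤ) : ZMod (3^n)) = _
      push_cast
      ring
  rw [← hcast, ← sub_eq_zero, ← Int.cast_sub, ZMod.intCast_zmod_eq_zero_iff_dvd]
  push_cast
  rfl


lemma powodd {a : ℤ} (h : (3:ℤ) ∣ a + 1) {t : ℕ} (ht : Odd t) : (3:ℤ) ∣ a^t + 1 := by
  have h1 : a ≡ -1 [ZMOD 3] :=
    (Int.modEq_iff_dvd.mpr (by simpa using h) : (-1:ℤ) ≡ a [ZMOD 3]).symm
  have h2 : a^t ≡ (-1)^t [ZMOD 3] := h1.pow t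
  rw [ht.neg_one_pow] at h2
  simpa using h2.symm.dvd

end LogisticAux

open LogisticAux in
/-- Theorem 1 (main case): for `n ≥ 1`, `μ` a positive integer with `3 ∤ μ`,
`μ̄ = μ mod 3`, an integer `x₀` with `0 ≤ x₀ < 3^n`, `3 ∣ x₀`,
`F^[μ̄](x₀) ≠ x₀`, and `v` the 3-adic valuation of `F^[μ̄](x₀) − x₀`
(i.e. `3^v ∣ F^[μ̄](x₀) − x₀` but `3^{v+1} ∤ F^[μ̄](x₀) − x₀`), if `n ≥ v` then the
minimal period of `x₀ mod 3^n` under `f(x) = μ·x·(x+1)` on `ZMod (3^n)` is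
`μ̄·3^{n−v}`. -/
theorem logistic_minimalPeriod_eq (n : ℕ) (hn : 1 ≤ n) (μ : ℕ) (hμ : 0 < μ)
    (hμ3 : ¬ 3 ∣ μ) (x₀ : ℤ) (hx₀ : 0 ≤ x₀) (hx₀' : x₀ < 3 ^ n) (h3 : (3 : ℤ) ∣ x₀)
    (hne : (fun y : ℤ => (μ : ℤ) * y * (y + 1))^[μ % 3] x₀ ≠ x₀) (v : ℕ)
    (hv1 : (3 : ℤ) ^ v ∣ ((fun y : ℤ => (μ : ℤ) * y * (y + 1))^[μ % 3] x₀ - x₀))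
    (hv2 : ¬ (3 : ℤ) ^ (v + 1) ∣ ((fun y : ℤ => (μ : ℤ) * y * (y + 1))^[μ % 3] x₀ - x₀))
    (hnv : v ≤ n) :
    Function.minimalPeriod
        (fun x : ZMod (3 ^ n) => (μ : ZMod (3 ^ n)) * x * (x + 1)) (x₀ : ZMod (3 ^ n)) =
      (μ % 3) * 3 ^ (n - v) := by
  have hF : (fun y : ℤ => (μ : ℤ) * y * (y + 1)) = F (μ:ℤ) := rfl
  rw [hF] at hne hv1 hv2
  set c : ℤ := (μ:ℤ) with hc
  set r₀ : ℕ := μ % 3 with hr₀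
  have hmod : r₀ = 1 ∨ r₀ = 2 := by omega
  -- basic facts
  have hμcast : (c % 3 : ℤ) = ((μ % 3 : ℕ) : ℤ) := by push_cast; rfl
  have hc1 : (3:ℤ) ∣ c^r₀ - 1 := by
    rcases hmod with h1 | h2
    · rw [h1, pow_one]
      have : (μ:ℤ) % 3 = 1 := by omega
      omega
    · rw [h2]
      have h31 : (3:ℤ) ∣ c + 1 := by
        have : (μ:ℤ) % 3 = 2 := by omega
        omega
      have he : c^2 - 1 = (c+1) * (c-1) := by ring
      rw [he]; exact h31.mul_right _
  have hx0ne : x₀ ≠ 0 := by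
    intro h0
    apply hne
    rw [h0]
    exact Function.iterate_fixed (by simp [F]) _
  have hx0pos : 0 < x₀ := lt_of_le_of_ne hx₀ (Ne.symm hx0ne)
  -- 9 divides the basic difference, hence v ≥ 2
  have h9e : (9:ℤ) ∣ (F c)^[r₀] x₀ - x₀ := by
    obtain ⟨d, hd, hd3⟩ := mult_form c x₀ h3 r₀
    have hdd : (3:ℤ) ∣ d - 1 := by
      have h6 : d - 1 = (d - c^r₀) + (c^r₀ - 1) := by ring
      rw [h6]; exact dvd_add hd3 hc1
    have h7 : (F c)^[r₀] x₀ - x₀ = x₀ * (d - 1) := by rw [hd]; ring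
    rw [h7]
    have h8 : (9:ℤ) = 3 * 3 := by norm_num
    rw [h8]; exact mul_dvd_mul h3 hdd
  have hv2' : 2 ≤ v := by
    by_contra hlt
    apply hv2
    have h81 : (3:ℤ)^(v+1) ∣ 3^2 := pow_dvd_pow 3 (by omega)
    have h82 : (3:ℤ)^2 = 9 := by norm_num
    rw [h82] at h81
    exact h81.trans h9e
  -- exact valuation v
  obtain ⟨b, hb⟩ := hv1
  have hbnd : ¬ (3:ℤ) ∣ b := by
    rintro ⟨b', hb'⟩
    exact hv2 ⟨b', by rw [hb, hb', pow_succ]; ring⟩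
  have hvaln := valn c x₀ h3 r₀ hc1 v hv2' b hb hbnd
  -- bridge
  have hbr := bridge n hn μ x₀
  -- forward: periods give divisibility
  have Tdvd : ∀ m : ℕ, 0 < m → (3:ℤ)^n ∣ (F c)^[r₀*m] x₀ - x₀ → 3^(n-v) ∣ m := by
    intro m hm hdvd
    set k := m.factorization 3 with hk
    have hqm : 3^k * (m / 3^k) = m := Nat.ordProj_mul_ordCompl_eq_self m 3
    have hq3 : ¬ 3 ∣ (m / 3^k) := Nat.not_dvd_ordCompl (by norm_num) hm.ne'
    obtain ⟨b', he', hb'⟩ := hvaln k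
    have hcr : (3:ℤ) ∣ c^(r₀*3^k) - 1 := by rw [pow_mul]; exact pow1 hc1 _
    obtain ⟨b'', he'', hb''⟩ := valm c x₀ h3 (r₀*3^k) hcr (v+k) b' he' hb' (m / 3^k)
      (by exact_mod_cast hq3)
    have harr : (r₀*3^k) * (m / 3^k) = r₀ * m := by rw [mul_assoc, hqm]
    rw [harr] at he''
    have hn2 : n ≤ v + k := by
      by_contra hlt
      have h21 : (3:ℤ)^(v+k+1) ∣ (F c)^[r₀*m] x₀ - x₀ :=
        dvd_trans (pow_dvd_pow 3 (by omega)) hdvd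
      rw [he'', pow_succ] at h21
      have h22 : (3:ℤ) ∣ b'' :=
        (mul_dvd_mul_iff_left (pow_ne_zero (v+k) (by norm_num : (3:ℤ) ≠ 0))).mp h21
      exact hb'' h22
    calc (3:ℕ)^(n-v) ∣ 3^k := pow_dvd_pow 3 (by omega)
      _ ∣ m := ⟨m / 3^k, hqm.symm⟩
  -- periodicity at T
  set T : ℕ := r₀ * 3^(n-v) with hT
  have hTn : (3:ℤ)^n ∣ (F c)^[T] x₀ - x₀ := by
    obtain ⟨b', he', _⟩ := hvaln (n-v)
    rw [he']
    have : v + (n - v) = n := by omega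
    rw [this]
    exact dvd_mul_right _ _
  set fz := (fun x : ZMod (3 ^ n) => (μ : ZMod (3 ^ n)) * x * (x + 1)) with hfz
  have hTper : Function.IsPeriodicPt fz T (x₀ : ZMod (3^n)) := (hbr T).mpr hTn
  have hTpos : 0 < T := by
    have : 0 < r₀ := by omega
    positivity
  set L := Function.minimalPeriod fz (x₀ : ZMod (3^n)) with hL
  have hLT : L ∣ T := hTper.minimalPeriod_dvd
  have hLpos : 0 < L := hTper.minimalPeriod_pos hTpos
  have hLper : Function.IsPeriodicPt fz L (x₀ : ZMod (3^n)) :=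
    Function.isPeriodicPt_minimalPeriod fz _
  have hLmul : Function.IsPeriodicPt fz (r₀ * L) (x₀ : ZMod (3^n)) := by
    have := hLper.mul_const r₀
    rwa [Nat.mul_comm] at this
  have hdvdL : 3^(n-v) ∣ L := Tdvd L hLpos ((hbr (r₀ * L)).mp hLmul)
  obtain ⟨cc, hcc⟩ := hdvdL
  have hccd : cc ∣ r₀ := by
    have h31 : 3^(n-v) * cc ∣ 3^(n-v) * r₀ := by
      rw [← hcc]
      have : 3^(n-v) * r₀ = T := by rw [hT]; ring
      rw [this]; exact hLT
    exact (mul_dvd_mul_iff_left (by positivity : 0 < 3^(n-v)).ne').mp h31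
  -- final case analysis
  show L = r₀ * 3^(n-v)
  rcases hmod with h1 | h2
  · rw [h1] at hccd
    have : cc = 1 := Nat.dvd_one.mp hccd
    rw [hcc, this, h1]; ring
  · rw [h2] at hccd
    rcases (Nat.prime_two.eq_one_or_self_of_dvd cc hccd) with hc1' | hc2'
    · -- cc = 1 : odd period, contradiction
      exfalso
      have hLval : L = 3^(n-v) := by rw [hcc, hc1', mul_one]
      have hfix : (3:ℤ)^n ∣ (F c)^[L] x₀ - x₀ := (hbr L).mp hLper
      obtain ⟨d, hd, hd3⟩ := mult_form c x₀ h3 L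
      have hodd : Odd L := by
        rw [hLval]
        exact Odd.pow (by decide)
      have hμ2 : (3:ℤ) ∣ c + 1 := by
        have : (μ:ℤ) % 3 = 2 := by omega
        omega
      have hpo : (3:ℤ) ∣ c^L + 1 := powodd hμ2 hodd
      have hnd : ¬ (3:ℤ) ∣ d - 1 := by
        obtain ⟨w1, hw1⟩ := hd3
        obtain ⟨w2, hw2⟩ := hpo
        intro hdd
        obtain ⟨w3, hw3⟩ := hdd
        omega
      have heL : (F c)^[L] x₀ - x₀ = x₀ * (d - 1) := by rw [hd]; ring
      rw [heL] at hfix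
      have hcop : IsCoprime ((3:ℤ)^n) (d - 1) :=
        ((Int.prime_three.coprime_iff_not_dvd).mpr hnd).pow_left
      have hdx : (3:ℤ)^n ∣ x₀ := hcop.dvd_of_dvd_mul_right hfix
      have := Int.le_of_dvd hx0pos hdx
      omega
    · rw [hcc, hc2', h2]; ring
end

section
/- Let μ be a positive integer with μ ≡ 2 (mod 3) and define F : ℤ → ℤ by F(x) = μ·x·(x+1). Let x₀ be an integer divisible by 3 and let w ≥ 1. If F^[2](x₀) ≡ x₀ (mod 3^w) and F^[2](x₀) ≢ x₀ (mod 3^{w+1}), then F(x₀) ≢ x₀ (mod 3^w). -/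
/-- Intermediate claim in the proof of Theorem 1: for `μ ≡ 2 (mod 3)`,
`F(x) = μ·x·(x+1)`, `3 ∣ x₀` and `w ≥ 1`, if `F^[2](x₀) ≡ x₀ (mod 3^w)` but
`F^[2](x₀) ≢ x₀ (mod 3^{w+1})`, then `F(x₀) ≢ x₀ (mod 3^w)`. -/
theorem logistic_not_fixed_of_period_two (μ : ℕ) (hμ : 0 < μ) (hμ3 : μ % 3 = 2)
    (x₀ : ℤ) (hx : (3 : ℤ) ∣ x₀) (w : ℕ) (hw : 1 ≤ w)
    (h1 : (fun y : ℤ => (μ : ℤ) * y * (y + 1))^[2] x₀ ≡ x₀ [ZMOD (3 : ℤ) ^ w])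
    (h2 : ¬ (fun y : ℤ => (μ : ℤ) * y * (y + 1))^[2] x₀ ≡ x₀ [ZMOD (3 : ℤ) ^ (w + 1)]) :
    ¬ ((μ : ℤ) * x₀ * (x₀ + 1) ≡ x₀ [ZMOD (3 : ℤ) ^ w]) := by
  intro h
  apply h2
  have hiter : (fun y : ℤ => (μ : ℤ) * y * (y + 1))^[2] x₀
      = (μ : ℤ) * ((μ : ℤ) * x₀ * (x₀ + 1)) * ((μ : ℤ) * x₀ * (x₀ + 1) + 1) := by
    simp [Function.iterate_succ, Function.comp]
  set a : ℤ := (μ : ℤ) * x₀ * (x₀ + 1) with ha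
  -- 3^w ∣ a - x₀
  obtain ⟨t, ht⟩ : (3 : ℤ) ^ w ∣ a - x₀ := Int.ModEq.dvd h.symm
  -- 3 ∣ μ*(a + x₀ + 1) + 1
  obtain ⟨s, hs⟩ : (3 : ℤ) ∣ (μ : ℤ) * (a + x₀ + 1) + 1 := by
    have := (ZMod.intCast_zmod_eq_zero_iff_dvd ((μ : ℤ) * (a + x₀ + 1) + 1) 3).mpr
    apply (ZMod.intCast_zmod_eq_zero_iff_dvd _ 3).mp
    have hx0 : ((x₀ : ZMod 3)) = 0 := by
      exact_mod_cast (ZMod.intCast_zmod_eq_zero_iff_dvd x₀ 3).mpr hx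
    have hμ0 : ((μ : ZMod 3)) = 2 := by
      rw [← ZMod.natCast_mod, hμ3]; rfl
    push_cast [ha]
    rw [hx0, hμ0]
    decide
  rw [hiter]
  -- show F(a) ≡ x₀ mod 3^(w+1)
  have key : (μ : ℤ) * a * (a + 1) - x₀ = (3 : ℤ) ^ (w + 1) * (t * s) := by
    have expand : (μ : ℤ) * a * (a + 1) - x₀
        = (a - x₀) * ((μ : ℤ) * (a + x₀ + 1) + 1) := by ring
    rw [expand, ht, hs, pow_succ]; ring
  have : (3 : ℤ) ^ (w + 1) ∣ x₀ - (μ : ℤ) * a * (a + 1) := by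
    rw [show x₀ - (μ : ℤ) * a * (a + 1) = -((μ : ℤ) * a * (a + 1) - x₀) by ring, key]
    exact (dvd_mul_right _ _).neg_right
  exact Int.ModEq.symm (Int.modEq_iff_dvd.mpr (by
    rw [show (μ : ℤ) * a * (a + 1) - x₀ = -(x₀ - (μ : ℤ) * a * (a + 1)) by ring]
    exact this.neg_right))
end

section
/- Let n ≥ 2 and let μ be a positive integer with μ ≡ 1 (mod 3). Define f : ZMod(3^n) → ZMod(3^n) by f(x) = μ·x·(x+1). Then the maximum over all x₀ ∈ ZMod(3^n) of the minimal period of x₀ under f equals 3^{n−2}. -/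
namespace LogisticAux

open Function Finset

section IntDyn

variable (m B D : ℤ)

def h (t : ℤ) : ℤ := 9*m*t^2 + B*t + D

def q (y t : ℤ) : ℤ := 9*m*(y+t) + B

lemma h_sub (y t : ℤ) : h m B D y - h m B D t = (y - t) * q m B y t := by
  simp only [h, q]; ring

def Q (k : ℕ) (y t : ℤ) : ℤ :=
  ∏ i ∈ Finset.range k, q m B ((h m B D)^[i] y) ((h m B D)^[i] t)

lemma Q_succ (k : ℕ) (y t : ℤ) :
    Q m B D (k+1) y t = Q m B D k y t * q m B ((h m B D)^[k] y) ((h m B D)^[k] t) := by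
  simp only [Q, Finset.prod_range_succ]

lemma iter_sub_s12 (k : ℕ) (y t : ℤ) :
    (h m B D)^[k] y - (h m B D)^[k] t = (y - t) * Q m B D k y t := by
  induction k with
  | zero => simp [Q]
  | succ k ih =>
      rw [Function.iterate_succ_apply', Function.iterate_succ_apply', h_sub,
        ih, Q_succ]
      ring

lemma iter_cong (j k : ℕ) (y t : ℤ) (hd : (3:ℤ)^j ∣ y - t) :
    (3:ℤ)^j ∣ (h m B D)^[k] y - (h m B D)^[k] t := by
  rw [iter_sub_s12]; exact hd.mul_right _

lemma Q_sub_one (hB : (3:ℤ) ∣ B - 1) (k : ℕ) (y t : ℤ) :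
    (3:ℤ) ∣ Q m B D k y t - 1 := by
  induction k with
  | zero => simp [Q]
  | succ k ih =>
      rw [Q_succ]
      have h1 : (3:ℤ) ∣ q m B ((h m B D)^[k] y) ((h m B D)^[k] t) - 1 := by
        have e : q m B ((h m B D)^[k] y) ((h m B D)^[k] t) - 1
            = 3 * (3*m*((h m B D)^[k] y + (h m B D)^[k] t)) + (B - 1) := by
          simp only [q]; ring
        rw [e]; exact dvd_add ⟨_, rfl⟩ hB
      have e2 : Q m B D k y t * q m B ((h m B D)^[k] y) ((h m B D)^[k] t) - 1
          = Q m B D k y t * (q m B ((h m B D)^[k] y) ((h m B D)^[k] t) - 1)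
            + (Q m B D k y t - 1) := by ring
      rw [e2]
      exact dvd_add (h1.mul_left _) ih

lemma Q_cong (j k : ℕ) (y t y' t' : ℤ) (hy : (3:ℤ)^j ∣ y - y') (ht : (3:ℤ)^j ∣ t - t') :
    (3:ℤ)^(j+2) ∣ Q m B D k y t - Q m B D k y' t' := by
  induction k with
  | zero => simp [Q]
  | succ k ih =>
      rw [Q_succ, Q_succ]
      have hq : (3:ℤ)^(j+2) ∣ q m B ((h m B D)^[k] y) ((h m B D)^[k] t)
          - q m B ((h m B D)^[k] y') ((h m B D)^[k] t') := by
        have e : q m B ((h m B D)^[k] y) ((h m B D)^[k] t)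
            - q m B ((h m B D)^[k] y') ((h m B D)^[k] t')
            = 9*(m*(((h m B D)^[k] y - (h m B D)^[k] y')
                + ((h m B D)^[k] t - (h m B D)^[k] t'))) := by
          simp only [q]; ring
        have e3 : (3:ℤ)^(j+2) = 9 * 3^j := by ring
        rw [e, e3]
        exact mul_dvd_mul_left 9 (((dvd_add (iter_cong m B D j k y y' hy)
          (iter_cong m B D j k t t' ht))).mul_left m)
      have e4 : Q m B D k y t * q m B ((h m B D)^[k] y) ((h m B D)^[k] t)
          - Q m B D k y' t' * q m B ((h m B D)^[k] y') ((h m B D)^[k] t')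
          = Q m B D k y t * (q m B ((h m B D)^[k] y) ((h m B D)^[k] t)
              - q m B ((h m B D)^[k] y') ((h m B D)^[k] t'))
            + (Q m B D k y t - Q m B D k y' t')
              * q m B ((h m B D)^[k] y') ((h m B D)^[k] t') := by ring
      rw [e4]
      exact dvd_add (hq.mul_left _) (ih.mul_right _)

/-- The key valuation lemma. -/
lemma main_val (hB : (3:ℤ) ∣ B - 1) (hD : ¬ (3:ℤ) ∣ D) :
    ∀ k : ℕ, ∀ t : ℤ, (3:ℤ)^k ∣ (h m B D)^[3^k] t - t
      ∧ ¬ (3:ℤ)^(k+1) ∣ (h m B D)^[3^k] t - t := by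
  intro k
  induction k with
  | zero =>
      intro t
      constructor
      · simp
      · intro hdvd
        simp only [pow_one, pow_zero, Function.iterate_one] at hdvd
        have e : D = (h m B D t - t) - 3*(3*m*t^2) - (B-1)*t := by
          simp only [h]; ring
        exact hD (by rw [e]; exact dvd_sub (dvd_sub hdvd ⟨_, rfl⟩) (hB.mul_right t))
  | succ k ih =>
      intro t
      -- H = h^[3^k]
      set H : ℤ → ℤ := (h m B D)^[3^k] with hH
      have hiter : (h m B D)^[3^(k+1)] t = H (H (H t)) := by
        rw [pow_succ, Function.iterate_mul]
        rfl
      obtain ⟨hA, hA'⟩ := ih t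
      set A : ℤ := H t - t with hAdef
      obtain ⟨α, hα⟩ := hA
      have hα3 : ¬ (3:ℤ) ∣ α := by
        rintro ⟨c, hc⟩
        exact hA' ⟨c, by rw [hα, hc, pow_succ]; ring⟩
      set Q₁ : ℤ := Q m B D (3^k) (H t) t with hQ1
      set Q₂ : ℤ := Q m B D (3^k) (H (H t)) (H t) with hQ2
      have e1 : H (H t) - H t = A * Q₁ := by
        rw [hAdef]; exact iter_sub_s12 m B D (3^k) (H t) t
      have e2 : H (H (H t)) - H (H t) = (A * Q₁) * Q₂ := by
        rw [← e1]; exact iter_sub_s12 m B D (3^k) (H (H t)) (H t)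
      have etot : H (H (H t)) - t = A * (1 + Q₁ + Q₁ * Q₂) := by
        have e0 : H (H (H t)) - t = (H (H (H t)) - H (H t)) + (H (H t) - H t) + (H t - t) := by
          ring
        rw [e0, e1, e2, ← hAdef]; ring
      obtain ⟨s, hs⟩ := Q_sub_one m B D hB (3^k) (H t) t
      have hs' : Q₁ - 1 = 3*s := hs
      have hAd : (3:ℤ)^k ∣ A := ⟨α, hα⟩
      have hHt : (3:ℤ)^k ∣ H (H t) - H t := by
        rw [e1, hα]; exact (Dvd.intro _ rfl).mul_right _
      have hE : (3:ℤ)^(k+2) ∣ Q₂ - Q₁ := Q_cong m B D k (3^k) (H (H t)) (H t) (H t) t hHt hAd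
      have h9E : (9:ℤ) ∣ Q₂ - Q₁ := by
        refine dvd_trans ⟨3^k, by ring⟩ hE
      obtain ⟨e, he⟩ := h9E
      have hQ2e : Q₂ = 1 + 3*s + 9*e := by omega
      have hQ1s : Q₁ = 1 + 3*s := by omega
      set w : ℤ := s + s^2 + e*(1+3*s) with hw
      have hsum : 1 + Q₁ + Q₁ * Q₂ = 3 + 9*w := by rw [hQ1s, hQ2e, hw]; ring
      have hfin : (h m B D)^[3^(k+1)] t - t = 3^(k+1) * (α * (1 + 3*w)) := by
        rw [hiter, etot, hsum, hα, pow_succ]; ring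
      constructor
      · exact ⟨α * (1 + 3*w), hfin⟩
      · intro hdvd
        rw [hfin] at hdvd
        have h3 : (3:ℤ) ∣ α * (1 + 3*w) := by
          have hne : ((3:ℤ)^(k+1)) ≠ 0 := pow_ne_zero _ (by norm_num)
          have : (3:ℤ)^(k+1) * 3 ∣ 3^(k+1) * (α * (1 + 3*w)) := by
            rw [← pow_succ]; exact hdvd
          exact (mul_dvd_mul_iff_left hne).mp this
        rcases (Int.prime_three.dvd_mul.mp h3) with hc | hc
        · exact hα3 hc
        · obtain ⟨c, hc⟩ := hc
          omega

end IntDyn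
end LogisticAux

namespace LogisticAux
open Function Finset

section Bridge

/-- the integer logistic map with `μ = 3a+1` -/
def fhat (a : ℤ) (z : ℤ) : ℤ := (3*a+1) * z * (z+1)

def mB (a c : ℤ) : ℤ := (3*a+1)*(6*c+1)
def mD (a c : ℤ) : ℤ := (3*a+1)*c^2 + a*c

lemma hB_dvd (a c : ℤ) : (3:ℤ) ∣ mB a c - 1 := ⟨6*a*c + a + 2*c, by unfold mB; ring⟩

lemma exists_c (a : ℤ) : ∃ c : ℤ, ¬ (3:ℤ) ∣ mD a c := by
  by_cases hA : (3:ℤ) ∣ a + 1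
  · refine ⟨2, ?_⟩
    have e : mD a 2 = 14*a + 4 := by unfold mD; ring
    rw [e]; omega
  · refine ⟨1, ?_⟩
    have e : mD a 1 = 4*a + 1 := by unfold mD; ring
    rw [e]; omega

lemma fhat_step (a c t : ℤ) :
    fhat a (3*c + 9*t) = 3*c + 9 * h (3*a+1) (mB a c) (mD a c) t := by
  unfold fhat h mB mD; ring

lemma fhat_iter (a c : ℤ) (j : ℕ) (t : ℤ) :
    (fhat a)^[j] (3*c + 9*t) = 3*c + 9 * (h (3*a+1) (mB a c) (mD a c))^[j] t := by
  induction j generalizing t with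
  | zero => simp
  | succ j ih =>
      rw [Function.iterate_succ_apply, fhat_step, ih, ← Function.iterate_succ_apply]

end Bridge
end LogisticAux

namespace LogisticAux
open Function

lemma lower (n : ℕ) (hn : 2 ≤ n) (μ : ℕ) (hμ3 : μ % 3 = 1) :
    ∃ x₀ : ZMod (3^n), Function.minimalPeriod
      (fun x : ZMod (3^n) => (μ : ZMod (3^n)) * x * (x + 1)) x₀ = 3^(n-2) := by
  haveI : NeZero ((3:ℕ)^n) := ⟨by positivity⟩
  set aN : ℕ := μ / 3 with haN
  have hμeq : μ = 3 * aN + 1 := by omega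
  set a : ℤ := (aN : ℤ) with ha
  obtain ⟨c, hc⟩ := exists_c a
  have hB := hB_dvd a c
  have main := main_val (3*a+1) (mB a c) (mD a c) hB hc
  set F : ZMod (3^n) → ZMod (3^n) := fun x => (μ : ZMod (3^n)) * x * (x + 1) with hF
  set x₀ : ZMod (3^n) := ((3*c : ℤ) : ZMod (3^n)) with hx₀
  set HH : ℕ → ℤ := fun j => (h (3*a+1) (mB a c) (mD a c))^[j] 0 with hHH
  have hcomm : ∀ z : ℤ, F ((z : ZMod (3^n))) = ((fhat a z : ℤ) : ZMod (3^n)) := by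
    intro z
    simp only [hF, fhat]
    rw [hμeq]
    push_cast [ha]
    ring
  have hit : ∀ j : ℕ, F^[j] x₀ = (((fhat a)^[j] (3*c) : ℤ) : ZMod (3^n)) := by
    intro j
    induction j with
    | zero => simp [hx₀]
    | succ j ih =>
        rw [Function.iterate_succ_apply', ih, hcomm]
        exact congrArg _ (Function.iterate_succ_apply' (fhat a) j (3*c)).symm
  have hpow : ((3:ℤ)^n) = 9 * 3^(n-2) := by
    have e : n = 2 + (n-2) := by omega
    rw [e, pow_add]; norm_num
  have horb : ∀ j : ℕ, (fhat a)^[j] (3*c) = 3*c + 9 * HH j := by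
    intro j
    have := fhat_iter a c j 0
    simpa [hHH] using this
  have htrans : ∀ j : ℕ, (F^[j] x₀ = x₀ ↔ (3:ℤ)^(n-2) ∣ HH j) := by
    intro j
    rw [hit j, hx₀, horb j]
    constructor
    · intro hq
      have hmod := (ZMod.intCast_eq_intCast_iff _ _ _).mp hq
      have hdvd : ((3^n : ℕ) : ℤ) ∣ (3*c) - (3*c + 9 * HH j) := Int.ModEq.dvd hmod
      have e2 : (3*c:ℤ) - (3*c + 9 * HH j) = -(9 * HH j) := by ring
      rw [e2, Int.dvd_neg] at hdvd
      push_cast at hdvd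
      rw [hpow] at hdvd
      exact (mul_dvd_mul_iff_left (by norm_num : (9:ℤ) ≠ 0)).mp hdvd
    · intro hdvd
      refine (ZMod.intCast_eq_intCast_iff _ _ _).mpr (Int.ModEq.symm (Int.modEq_iff_dvd.mpr ?_))
      have e2 : (3*c + 9 * HH j : ℤ) - 3*c = 9 * HH j := by ring
      rw [e2]
      push_cast
      rw [hpow]
      exact mul_dvd_mul_left 9 hdvd
  refine ⟨x₀, ?_⟩
  have hper : Function.IsPeriodicPt F (3^(n-2)) x₀ := by
    show F^[3^(n-2)] x₀ = x₀
    rw [htrans]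
    simpa [hHH] using (main (n-2) 0).1
  have hmpdvd : Function.minimalPeriod F x₀ ∣ 3^(n-2) := hper.minimalPeriod_dvd
  obtain ⟨j, hj, hmp⟩ := (Nat.dvd_prime_pow Nat.prime_three).mp hmpdvd
  rcases Nat.lt_or_ge j (n-2) with hlt | hge
  · exfalso
    have hn3 : 3 ≤ n := by omega
    have hdvd2 : Function.minimalPeriod F x₀ ∣ 3^(n-3) := by
      rw [hmp]; exact pow_dvd_pow 3 (by omega)
    have hper3 : Function.IsPeriodicPt F (3^(n-3)) x₀ :=
      (Function.isPeriodicPt_minimalPeriod F x₀).trans_dvd hdvd2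
    have hd3 := (htrans (3^(n-3))).mp hper3
    have hnd := (main (n-3) 0).2
    simp only [sub_zero] at hnd
    have e : (n-3) + 1 = n - 2 := by omega
    rw [e] at hnd
    exact hnd hd3
  · rw [hmp]
    congr 1
    omega

end LogisticAux

namespace LogisticAux
open Function Finset

lemma upper (n : ℕ) (hn : 2 ≤ n) (μ : ℕ) (hμ3 : μ % 3 = 1) (x : ZMod (3^n)) :
    Function.minimalPeriod (fun y : ZMod (3^n) => (μ : ZMod (3^n)) * y * (y + 1)) x
      ≤ 3^(n-2) := by
  classical
  haveI : NeZero ((3:ℕ)^n) := ⟨by positivity⟩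
  set F : ZMod (3^n) → ZMod (3^n) := fun y => (μ : ZMod (3^n)) * y * (y + 1) with hF
  set L := Function.minimalPeriod F x with hL
  rcases Nat.eq_zero_or_pos L with h0 | hLpos
  · simp [h0]
  have h9 : (9:ℕ) ∣ 3^n := by
    have h2 : (3:ℕ)^2 ∣ 3^n := pow_dvd_pow 3 hn
    simpa using h2
  set φ : ZMod (3^n) →+* ZMod 9 := ZMod.castHom h9 (ZMod 9) with hφ
  set F9 : ZMod 9 → ZMod 9 := fun p => (μ : ZMod 9) * p * (p + 1) with hF9
  have hsc : ∀ z, φ (F z) = F9 (φ z) := by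
    intro z
    simp [hF, hF9, map_mul, map_add, map_natCast, map_one]
  have hsc_it : ∀ (j : ℕ) z, φ (F^[j] z) = F9^[j] (φ z) := by
    intro j
    induction j with
    | zero => intro z; simp
    | succ j ih =>
        intro z
        rw [Function.iterate_succ_apply, ih, hsc, ← Function.iterate_succ_apply]
  have hμ9 : μ % 9 = 1 ∨ μ % 9 = 4 ∨ μ % 9 = 7 := by omega
  have hcast9 : (μ : ZMod 9) = ((μ % 9 : ℕ) : ZMod 9) := (ZMod.natCast_mod μ 9).symm
  have key9 : ∀ p : ZMod 9, F9 (F9 (F9 p)) = F9 (F9 p) := by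
    intro p
    simp only [hF9, hcast9]
    rcases hμ9 with hv | hv | hv <;> rw [hv] <;> revert p <;> decide
  have hstab : ∀ (k : ℕ) (q : ZMod 9), F9^[k+2] q = F9^[2] q := by
    intro k
    induction k with
    | zero => intro q; rfl
    | succ k ih =>
        intro q
        rw [show k+1+2 = (k+2)+1 from rfl, Function.iterate_succ_apply', ih]
        show F9 (F9 (F9 q)) = F9 (F9 q)
        exact key9 q
  have hpp : Function.IsPeriodicPt F L x := Function.isPeriodicPt_minimalPeriod F x
  have h2L : F^[L*2] x = x := hpp.mul_const 2
  have hfix2 : F9^[2] (φ x) = φ x := by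
    have hc := hsc_it (L*2) x
    rw [h2L] at hc
    have e : L*2 = (L*2-2) + 2 := by omega
    rw [e, hstab] at hc
    exact hc.symm
  have hfix : F9 (φ x) = φ x := by
    have h1 : F9 (φ x) = F9 (F9^[2] (φ x)) := by rw [hfix2]
    have h2 : F9 (F9^[2] (φ x)) = F9 (F9 (F9 (φ x))) := rfl
    rw [h1, h2, key9]
    exact hfix2
  have horb : ∀ j : ℕ, φ (F^[j] x) = φ x := by
    intro j
    rw [hsc_it]
    exact Function.IsFixedPt.iterate hfix j
  -- counting
  set S : Finset (ZMod (3^n)) := Finset.univ.filter (fun y => φ y = φ x) with hS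
  have hmaps : ∀ j ∈ Finset.range L, F^[j] x ∈ S := fun j _ =>
    Finset.mem_filter.mpr ⟨Finset.mem_univ _, horb j⟩
  have hinj : Set.InjOn (fun j => F^[j] x) ↑(Finset.range L) := by
    rw [Finset.coe_range]
    exact Function.iterate_injOn_Iio_minimalPeriod
  have hLle : L ≤ S.card := by
    have := Finset.card_le_card_of_injOn _ hmaps hinj
    simpa using this
  -- cardinality of the fiber
  have hsurj : Function.Surjective φ := by
    intro b
    exact ⟨((b.val : ℕ) : ZMod (3^n)), by rw [map_natCast]; exact ZMod.natCast_rightInverse b⟩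
  set φ' : ZMod (3^n) →+ ZMod 9 := AddMonoidHom.mk' φ (map_add φ) with hφ'
  set K := φ'.ker with hK
  have hsurj' : Function.Surjective φ' := hsurj
  have hquot : Nat.card (ZMod (3^n) ⧸ K) = 9 := by
    have e := QuotientAddGroup.quotientKerEquivOfSurjective φ' hsurj'
    rw [Nat.card_congr e.toEquiv, Nat.card_zmod]
  have hcards : (3:ℕ)^n = 9 * Nat.card K := by
    have hc := AddSubgroup.card_eq_card_quotient_mul_card_addSubgroup K
    rw [Nat.card_zmod, hquot] at hc
    exact hc
  have hpow : (3:ℕ)^n = 9 * 3^(n-2) := by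
    have e : n = 2 + (n-2) := by omega
    rw [e, pow_add]; norm_num
  have hKcard : Nat.card K = 3^(n-2) := by omega
  have hScard : S.card = 3^(n-2) := by
    have e : {y : ZMod (3^n) // φ y = φ x} ≃ K :=
      { toFun := fun y => ⟨y.1 - x, by
          rw [AddMonoidHom.mem_ker]
          show φ (y.1 - x) = 0
          rw [map_sub, y.2, sub_self]⟩
        invFun := fun z => ⟨z.1 + x, by
          have hz : φ z.1 = 0 := z.2
          show φ (z.1 + x) = φ x
          rw [map_add, hz, zero_add]⟩
        left_inv := fun y => by simp
        right_inv := fun z => by simp }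
    calc S.card = Fintype.card {y : ZMod (3^n) // φ y = φ x} := by
          rw [Fintype.card_subtype]
      _ = Nat.card {y : ZMod (3^n) // φ y = φ x} := Nat.card_eq_fintype_card.symm
      _ = Nat.card K := Nat.card_congr e
      _ = 3^(n-2) := hKcard
  omega

end LogisticAux



/-- Corollary 1 (case `μ ≡ 1 mod 3`): for `n ≥ 2` and a positive integer `μ` with
`μ ≡ 1 (mod 3)`, the maximum over all `x₀ ∈ ZMod (3^n)` of the minimal period of
`x₀` under `f(x) = μ·x·(x+1)` equals `3^{n−2}`. -/
theorem logistic_maxPeriod_mu_one (n : ℕ) (hn : 2 ≤ n) (μ : ℕ) (hμ : 0 < μ)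
    (hμ3 : μ % 3 = 1) :
    Finset.univ.sup
        (fun x₀ : ZMod (3 ^ n) =>
          Function.minimalPeriod
            (fun x : ZMod (3 ^ n) => (μ : ZMod (3 ^ n)) * x * (x + 1)) x₀) =
      3 ^ (n - 2) := by
  classical
  apply le_antisymm
  · exact Finset.sup_le fun x _ => LogisticAux.upper n hn μ hμ3 x
  · obtain ⟨x₀, hx₀⟩ := LogisticAux.lower n hn μ hμ3
    calc (3:ℕ)^(n-2)
        = Function.minimalPeriod
            (fun x : ZMod (3 ^ n) => (μ : ZMod (3 ^ n)) * x * (x + 1)) x₀ := hx₀.symm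
      _ ≤ _ := Finset.le_sup (Finset.mem_univ x₀)
end

section
/- Let n ≥ 3 and let μ be a positive integer with μ mod 9 = 8 and μ mod 27 ≠ 17. Define f : ZMod(3^n) → ZMod(3^n) by f(x) = μ·x·(x+1). Then the maximum over all x₀ ∈ ZMod(3^n) of the minimal period of x₀ under f equals 2·3^{n−3}. -/
namespace LogisticCor1Mu8

def useq (μ z : ℤ) : ℕ → ℤ
  | 0 => 1
  | k+1 => μ * useq μ z k * (1 + z * useq μ z k)

def lamseq (μ z : ℤ) (a b : ℕ) : ℕ → ℤ
  | 0 => 1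
  | k+1 => lamseq μ z a b k * (μ * (1 + z * (useq μ z (a+k) + useq μ z (b+k))))

variable {μ z : ℤ}

lemma useq_succ (k : ℕ) : useq μ z (k+1) = μ * useq μ z k * (1 + z * useq μ z k) := rfl

lemma lamseq_succ (a b k : ℕ) : lamseq μ z a b (k+1)
    = lamseq μ z a b k * (μ * (1 + z * (useq μ z (a+k) + useq μ z (b+k)))) := rfl

lemma diff_eq (a b : ℕ) : ∀ k, useq μ z (a+k) - useq μ z (b+k)
    = (useq μ z a - useq μ z b) * lamseq μ z a b k
  | 0 => by simp [lamseq]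
  | k+1 => by
    have ih := diff_eq a b k
    show useq μ z (a+k+1) - useq μ z (b+k+1) = _
    rw [useq_succ, useq_succ, lamseq_succ]
    linear_combination (μ * (1 + z * (useq μ z (a+k) + useq μ z (b+k)))) * ih

lemma parity (t g : ℤ) (hμ : μ = 9*t - 1) (hz : z = 3*g) :
    ∀ k, (∃ a, useq μ z (2*k) = 1 + 3*a) ∧ (∃ a, useq μ z (2*k+1) = -1 + 3*a)
  | 0 => by
    constructor
    · exact ⟨0, by simp [useq]⟩
    · refine ⟨3*t + 9*t*g - g, ?_⟩
      show μ * useq μ z 0 * (1 + z * useq μ z 0) = _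
      simp only [useq]
      rw [hμ, hz]; ring
  | k+1 => by
    obtain ⟨_, ⟨a, ha⟩⟩ := parity t g hμ hz k
    have heven : ∃ b, useq μ z (2*(k+1)) = 1 + 3*b := by
      refine ⟨-a - 3*t + 9*t*a - g + 6*g*a - 9*g*a^2 + 9*g*t - 54*g*t*a + 81*g*t*a^2, ?_⟩
      rw [show 2*(k+1) = (2*k+1)+1 by ring, useq_succ, ha, hμ, hz]; ring
    obtain ⟨b, hb⟩ := heven
    refine ⟨⟨b, hb⟩, ?_⟩
    refine ⟨-b + 3*t + 9*t*b - g - 6*g*b - 9*g*b^2 + 9*g*t + 54*g*t*b + 81*g*t*b^2, ?_⟩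
    rw [show 2*(k+1)+1 = (2*(k+1))+1 from rfl, useq_succ, hb, hμ, hz]; ring

lemma lam_one_add_nine (t g : ℤ) (hμ : μ = 9*t - 1) (hz : z = 3*g) (a b : ℕ) :
    ∀ k, ∃ A, lamseq μ z (2*a) (2*b) (2*k) = 1 + 9*A
  | 0 => ⟨0, by simp [lamseq]⟩
  | k+1 => by
    obtain ⟨A, hA⟩ := lam_one_add_nine t g hμ hz a b k
    obtain ⟨a1, ha1⟩ := (parity t g hμ hz (a+k)).1
    obtain ⟨a2, ha2⟩ := (parity t g hμ hz (b+k)).1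
    obtain ⟨a3, ha3⟩ := (parity t g hμ hz (a+k)).2
    obtain ⟨a4, ha4⟩ := (parity t g hμ hz (b+k)).2
    have e1 : 2*a + (2*k+1) = 2*(a+k)+1 := by ring
    have e2 : 2*b + (2*k+1) = 2*(b+k)+1 := by ring
    have e3 : 2*a + 2*k = 2*(a+k) := by ring
    have e4 : 2*b + 2*k = 2*(b+k) := by ring
    rw [show 2*(k+1) = (2*k+1)+1 by ring, lamseq_succ, lamseq_succ, e1, e2, e3, e4,
      ha1, ha2, ha3, ha4, hA, hμ, hz]
    refine ⟨A + (1+9*A) * ((9*t^2-2*t) + (g*(a1+a2+a3+a4) + g^2*(2+3*(a1+a2))*(-2+3*(a3+a4)))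
      + 9*((9*t^2-2*t) * (g*(a1+a2+a3+a4) + g^2*(2+3*(a1+a2))*(-2+3*(a3+a4))))), ?_⟩
    ring

lemma step3 (t g : ℤ) (hμ : μ = 9*t - 1) (hz : z = 3*g) (j : ℕ) :
    ∃ s, useq μ z (2*(3*j)) - 1 = (useq μ z (2*j) - 1) * (3 + 9*s) := by
  have h1 := diff_eq (a := 2*j) (b := 0) (μ := μ) (z := z) (2*j)
  have h2 := diff_eq (a := 4*j) (b := 2*j) (μ := μ) (z := z) (2*j)
  obtain ⟨A, hA⟩ := lam_one_add_nine t g hμ hz j 0 j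
  obtain ⟨B, hB⟩ := lam_one_add_nine t g hμ hz (2*j) j j
  rw [show (2*0 : ℕ) = 0 from rfl] at hA
  rw [show 2*(2*j) = 4*j by ring] at hB
  rw [show 2*j+2*j = 4*j by ring, show (0:ℕ)+2*j = 2*j by ring, hA,
    show (useq μ z 0 : ℤ) = 1 from rfl] at h1
  rw [show 4*j+2*j = 6*j by ring, show 2*j+2*j = 4*j by ring, hB] at h2
  refine ⟨2*A + B + 9*A*B, ?_⟩
  rw [show 2*(3*j) = 6*j by ring]
  linear_combination h2 + (2 + 9*B) * h1

lemma base9 (t g : ℤ) (hμ : μ = 9*t - 1) (hz : z = 3*g) :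
    ∃ q, useq μ z 2 = 1 + 9*q := by
  refine ⟨-2*g^2 - 3*g^3 - 2*t + 3*t*g + 54*t*g^2 + 81*t*g^3 + 9*t^2 - 54*t^2*g
    - 486*t^2*g^2 - 729*t^2*g^3 + 243*t^3*g + 1458*t^3*g^2 + 2187*t^3*g^3, ?_⟩
  show μ * (μ * useq μ z 0 * (1 + z * useq μ z 0))
      * (1 + z * (μ * useq μ z 0 * (1 + z * useq μ z 0))) = _
  simp only [useq]
  rw [hμ, hz]; ring

lemma base27 (t : ℤ) (hμ : μ = 9*t - 1) :
    useq μ 3 2 = 1 + 9*(3888*t^3 - 1260*t^2 + 136*t - 5) := by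
  show μ * (μ * useq μ 3 0 * (1 + 3 * useq μ 3 0))
      * (1 + 3 * (μ * useq μ 3 0 * (1 + 3 * useq μ 3 0))) = _
  simp only [useq]
  rw [hμ]; ring

/-- Lower-bound-side divisibility: `3^(e+2) ∣ u(2·3^e) - 1` for any `3 ∣ z`. -/
lemma L1 (t g : ℤ) (hμ : μ = 9*t - 1) (hz : z = 3*g) :
    ∀ e : ℕ, ∃ q, useq μ z (2 * 3^e) = 1 + 3^(e+2) * q
  | 0 => by
    obtain ⟨q, hq⟩ := base9 t g hμ hz
    exact ⟨q, by norm_num [hq]⟩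
  | e+1 => by
    obtain ⟨q, hq⟩ := L1 t g hμ hz e
    obtain ⟨s, hs⟩ := step3 t g hμ hz (3^e)
    rw [show 2*(3*3^e) = 2*3^(e+1) by rw [pow_succ]; ring, hq] at hs
    exact ⟨q*(1+3*s), by linear_combination hs⟩

/-- Exactness for `z = 3`: `u(2·3^e) - 1 = 3^(e+2) * c` with `3 ∤ c`. -/
lemma L2 (t : ℤ) (hμ : μ = 9*t - 1) (ht : ¬ (3:ℤ) ∣ (t+1)) :
    ∀ e : ℕ, ∃ c, useq μ 3 (2 * 3^e) = 1 + 3^(e+2) * c ∧ ¬ (3:ℤ) ∣ c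
  | 0 => by
    refine ⟨3888*t^3 - 1260*t^2 + 136*t - 5, ?_, ?_⟩
    · rw [show (2 * 3^0 : ℕ) = 2 by norm_num]
      rw [base27 t hμ]; ring
    · intro h
      have h3 : (3:ℤ) ∣ (3888*t^3 - 1260*t^2 + 136*t - 5) - (t+1) :=
        ⟨1296*t^3 - 420*t^2 + 45*t - 2, by ring⟩
      have := dvd_sub h h3
      simp only [sub_sub_cancel] at this
      exact ht this
  | e+1 => by
    obtain ⟨c, hc, hc3⟩ := L2 t hμ ht e
    obtain ⟨s, hs⟩ := step3 (z := 3) t 1 hμ (by norm_num) (3^e)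
    rw [show 2*(3*3^e) = 2*3^(e+1) by rw [pow_succ]; ring, hc] at hs
    refine ⟨c*(1+3*s), by linear_combination hs, ?_⟩
    intro h
    rcases (Int.prime_three.dvd_mul).mp h with h' | h'
    · exact hc3 h'
    · obtain ⟨w, hw⟩ := h'
      omega


lemma iter_eq (μv : ℕ) (N : ℕ) (z : ℤ) (k : ℕ) :
    (fun x : ZMod N => (μv : ZMod N) * x * (x+1))^[k] ((z : ℤ) : ZMod N)
      = ((z : ℤ) : ZMod N) * ((useq (μv : ℤ) z k : ℤ) : ZMod N) := by
  induction k with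
  | zero => simp [useq]
  | succ k ih =>
    rw [Function.iterate_succ_apply', ih, useq_succ]
    push_cast
    ring

end LogisticCor1Mu8

open LogisticCor1Mu8 Function in
/-- Corollary 1 (case `μ ≡ 8 mod 9`, `μ ≢ 17 mod 27`): for `n ≥ 3` and a positive
integer `μ` with `μ mod 9 = 8` and `μ mod 27 ≠ 17`, the maximum over all
`x₀ ∈ ZMod (3^n)` of the minimal period of `x₀` under `f(x) = μ·x·(x+1)` equals
`2·3^{n−3}`. -/

theorem logistic_maxPeriod_mu_eight (n : ℕ) (hn : 3 ≤ n) (μ : ℕ) (hμ : 0 < μ)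
    (hμ9 : μ % 9 = 8) (hμ27 : μ % 27 ≠ 17) :
    Finset.univ.sup
        (fun x₀ : ZMod (3 ^ n) =>
          Function.minimalPeriod
            (fun x : ZMod (3 ^ n) => (μ : ZMod (3 ^ n)) * x * (x + 1)) x₀) =
      2 * 3 ^ (n - 3) := by
  haveI : NeZero (3^n) := ⟨pow_ne_zero n (by norm_num)⟩
  set N := 3^n with hN
  set F : ZMod N → ZMod N := fun x => (μ : ZMod N) * x * (x + 1) with hF
  set M := 2 * 3^(n-3) with hM
  have hMpos : 0 < M := by positivity
  -- arithmetic of μ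
  have h9 : ((μ:ℤ)) % 9 = 8 := by omega
  have h27 : ((μ:ℤ)) % 27 ≠ 17 := by omega
  obtain ⟨t, ht⟩ : ∃ t : ℤ, (μ:ℤ) = 9*t - 1 := ⟨((μ:ℤ)+1)/9, by omega⟩
  have ht3 : ¬ (3:ℤ) ∣ (t+1) := by
    rintro ⟨w, hw⟩; omega
  have hμ3 : ((μ:ℕ) : ZMod 3) = 2 := by
    have : μ % 3 = 2 := by omega
    rw [← ZMod.natCast_mod, this]; decide
  -- reduction hom
  have h3N : 3 ∣ N := dvd_pow_self 3 (by omega)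
  set π : ZMod N →+* ZMod 3 := ZMod.castHom h3N (ZMod 3) with hπ
  -- π of F
  have hπF : ∀ y : ZMod N, π (F y) = 2 * (π y) * (π y + 1) := by
    intro y
    simp only [hF, map_mul, map_add, map_one]
    rw [map_natCast π μ, hμ3]
  -- kernel lemma
  have hker : ∀ y : ZMod N, π y = 0 → ∃ c : ZMod N, y = 3 * c := by
    intro y hy
    have hyv : ((y.val : ℕ) : ZMod N) = y := ZMod.natCast_rightInverse y
    have : ((y.val : ℕ) : ZMod 3) = 0 := by
      rw [← map_natCast π (y.val), hyv, hy]
    have h3v : 3 ∣ y.val := (ZMod.natCast_eq_zero_iff _ _).mp this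
    obtain ⟨m, hm⟩ := h3v
    exact ⟨(m : ZMod N), by rw [← hyv, hm]; push_cast; ring⟩
  -- value of val-cast
  have hvalcast : ∀ y : ZMod N, (((y.val : ℤ)) : ZMod N) = y := by
    intro y
    have := ZMod.natCast_rightInverse (n := N) y
    push_cast
    exact_mod_cast this
  -- divisibility → fixed under F^[M], for x ≡ 0 mod 3
  have hper0 : ∀ x₀ : ZMod N, π x₀ = 0 → F^[M] x₀ = x₀ := by
    intro x₀ h0
    set z : ℤ := (x₀.val : ℤ) with hz
    have hx : ((z : ℤ) : ZMod N) = x₀ := hvalcast x₀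
    have h3z : (3:ℤ) ∣ z := by
      have hyv : ((x₀.val : ℕ) : ZMod 3) = 0 := by
        rw [← map_natCast π (x₀.val)]
        rw [show ((x₀.val : ℕ) : ZMod N) = x₀ from ZMod.natCast_rightInverse x₀, h0]
      have := (ZMod.natCast_eq_zero_iff x₀.val 3).mp hyv
      rw [hz]
      exact_mod_cast Int.natCast_dvd_natCast.mpr this
    obtain ⟨g, hg⟩ := h3z
    obtain ⟨q, hq⟩ := L1 t g ht hg (n-3)
    have e32 : n-3+2 = n-1 := by omega
    rw [e32] at hq
    have hq' : useq (μ:ℤ) z M = 1 + 3^(n-1) * q := hq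
    have hzero : (((z * (3^(n-1) * q)) : ℤ) : ZMod N) = 0 := by
      rw [ZMod.intCast_zmod_eq_zero_iff_dvd]
      have hNc : ((N:ℕ):ℤ) = 3^(n-1)*3 := by
        rw [hN]; push_cast; rw [← pow_succ]; congr 1; omega
      rw [hNc, hg]
      exact ⟨g * q, by ring⟩
    calc F^[M] x₀ = ((z:ℤ) : ZMod N) * ((useq (μ:ℤ) z M : ℤ) : ZMod N) := by
            rw [← hx]; exact iter_eq μ N z M
      _ = ((z * useq (μ:ℤ) z M : ℤ) : ZMod N) := by rw [Int.cast_mul]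
      _ = ((z + z * (3^(n-1) * q) : ℤ) : ZMod N) := by rw [hq']; ring_nf
      _ = x₀ := by rw [Int.cast_add, hzero, add_zero, hx]
  -- main split
  apply le_antisymm
  · apply Finset.sup_le
    intro x₀ _
    have hcases : π x₀ = 0 ∨ π x₀ = 1 ∨ π x₀ = 2 := by
      generalize π x₀ = w; revert w; decide
    rcases hcases with h0 | h1 | h2
    · exact Nat.le_of_dvd hMpos
        (Function.IsPeriodicPt.minimalPeriod_dvd (hper0 x₀ h0))
    · rcases Nat.eq_zero_or_pos (Function.minimalPeriod F x₀) with hL | hL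
      · rw [hL]; exact Nat.zero_le _
      · have hbr : ∀ y : ZMod N, π y = 1 → π (F y) = 1 := by
          intro y hy; rw [hπF y, hy]; decide
        have hbrk : ∀ k, ∀ y : ZMod N, π y = 1 → π (F^[k] y) = 1 := by
          intro k
          induction k with
          | zero => intro y hy; simpa using hy
          | succ k ihk =>
            intro y hy
            rw [Function.iterate_succ_apply']
            exact hbr _ (ihk y hy)
        have hcon : ∀ k, ∀ a b : ZMod N, π a = 1 → π b = 1 →
            ∃ d, F^[k] a - F^[k] b = (3:ZMod N)^k * d := by
          intro k
          induction k with
          | zero => intro a b _ _; exact ⟨a - b, by simp⟩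
          | succ k ihk =>
            intro a b ha hb
            obtain ⟨d, hd⟩ := ihk a b ha hb
            have hA := hbrk k a ha
            have hB := hbrk k b hb
            have hsum : π (F^[k] a + F^[k] b + 1) = 0 := by
              rw [map_add, map_add, map_one, hA, hB]; decide
            obtain ⟨c3, hc3⟩ := hker _ hsum
            refine ⟨(μ : ZMod N) * d * c3, ?_⟩
            rw [Function.iterate_succ_apply', Function.iterate_succ_apply']
            simp only [hF]
            linear_combination (μ:ZMod N) * (F^[k] a + F^[k] b + 1) * hd
              + (μ:ZMod N) * ((3:ZMod N)^k * d) * hc3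
        have hLper : Function.IsPeriodicPt F (Function.minimalPeriod F x₀) x₀ :=
          Function.isPeriodicPt_minimalPeriod F x₀
        have hLn : Function.IsPeriodicPt F (Function.minimalPeriod F x₀ * n) x₀ :=
          hLper.mul_const n
        have hyper : Function.IsPeriodicPt F (Function.minimalPeriod F x₀ * n) (F x₀) :=
          hLn.apply
        obtain ⟨d, hd⟩ := hcon (Function.minimalPeriod F x₀ * n) x₀ (F x₀) h1 (hbr x₀ h1)
        have h3LN : ((3:ZMod N))^(Function.minimalPeriod F x₀ * n) = 0 := by
          have h0 : ((3^(Function.minimalPeriod F x₀ * n) : ℕ) : ZMod N) = 0 :=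
            (ZMod.natCast_eq_zero_iff _ _).mpr
              (pow_dvd_pow 3 (Nat.le_mul_of_pos_left n hL))
          push_cast at h0
          exact h0
        have e1 : F^[Function.minimalPeriod F x₀ * n] x₀ = x₀ := hLn
        have e2 : F^[Function.minimalPeriod F x₀ * n] (F x₀) = F x₀ := hyper
        rw [e1, e2, h3LN, zero_mul] at hd
        have hfix : Function.IsFixedPt F x₀ := (sub_eq_zero.mp hd).symm
        have : Function.minimalPeriod F x₀ ∣ 1 :=
          Function.IsPeriodicPt.minimalPeriod_dvd (hfix.isPeriodicPt 1)
        have := Nat.le_of_dvd one_pos this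
        omega
    · rcases Nat.eq_zero_or_pos (Function.minimalPeriod F x₀) with hL | hL
      · rw [hL]; exact Nat.zero_le _
      · exfalso
        have hLper : Function.IsPeriodicPt F (Function.minimalPeriod F x₀) x₀ :=
          Function.isPeriodicPt_minimalPeriod F x₀
        have hEq : F^[Function.minimalPeriod F x₀] x₀ = x₀ := hLper
        obtain ⟨k, hk⟩ : ∃ k, Function.minimalPeriod F x₀ = k + 1 :=
          ⟨_, (Nat.succ_pred_eq_of_pos hL).symm⟩
        rw [hk, Function.iterate_succ_apply'] at hEq
        have h2' : π (F (F^[k] x₀)) = 2 := by rw [hEq, h2]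
        rw [hπF] at h2'
        revert h2'
        generalize π (F^[k] x₀) = w
        revert w; decide
  · -- lower bound: the point 3 has minimal period exactly M
    set x₀ : ZMod N := ((3:ℤ) : ZMod N) with hx0
    have hNc : ((N:ℕ):ℤ) = 3^(n-1)*3 := by
      rw [hN]; push_cast; rw [← pow_succ]; congr 1; omega
    obtain ⟨q, hq⟩ := L1 (z := 3) t 1 ht (by norm_num) (n-3)
    have e32 : n-3+2 = n-1 := by omega
    rw [e32, ← hM] at hq
    have hMper : F^[M] x₀ = x₀ := by
      have hzero : (((3 * (3^(n-1) * q)) : ℤ) : ZMod N) = 0 := by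
        rw [ZMod.intCast_zmod_eq_zero_iff_dvd, hNc]
        exact ⟨q, by ring⟩
      calc F^[M] x₀ = (((3:ℤ)) : ZMod N) * ((useq (μ:ℤ) 3 M : ℤ) : ZMod N) := iter_eq μ N 3 M
        _ = ((3 * useq (μ:ℤ) 3 M : ℤ) : ZMod N) := by rw [Int.cast_mul]
        _ = ((3 + 3*(3^(n-1) * q) : ℤ) : ZMod N) := by rw [hq]; ring_nf
        _ = x₀ := by rw [Int.cast_add, hzero, add_zero]
    have hLdvd : Function.minimalPeriod F x₀ ∣ M :=
      Function.IsPeriodicPt.minimalPeriod_dvd hMper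
    have hdvdK : ∀ K : ℕ, F^[K] x₀ = x₀ → ((3:ℤ))^(n-1) ∣ (useq (μ:ℤ) 3 K - 1) := by
      intro K hK
      rw [hx0, iter_eq μ N 3 K] at hK
      have h0 : ((3 * useq (μ:ℤ) 3 K - 3 : ℤ) : ZMod N) = 0 := by
        push_cast at hK ⊢
        linear_combination hK
      have hdvd := (ZMod.intCast_zmod_eq_zero_iff_dvd _ _).mp h0
      rw [hNc] at hdvd
      obtain ⟨w, hw⟩ := hdvd
      refine ⟨w, ?_⟩
      have h3 : 3 * (useq (μ:ℤ) 3 K - 1) = 3 * (3^(n-1) * w) := by linarith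
      exact mul_left_cancel₀ (by norm_num : (3:ℤ) ≠ 0) h3
    have hLM : Function.minimalPeriod F x₀ = M := by
      by_contra hne
      have hMLne1 : M / Function.minimalPeriod F x₀ ≠ 1 := by
        intro h1
        have := Nat.eq_mul_of_div_eq_right hLdvd h1
        exact hne (by omega)
      obtain ⟨p, hp, hpd⟩ := Nat.exists_prime_and_dvd hMLne1
      obtain ⟨r, hr⟩ := hpd
      have hMeq := Nat.mul_div_cancel' hLdvd
      rw [hr] at hMeq
      -- hMeq : L * (p*r) = M
      have hKper : Function.IsPeriodicPt F (Function.minimalPeriod F x₀ * r) x₀ :=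
        (Function.isPeriodicPt_minimalPeriod F x₀).mul_const r
      have hKM : (Function.minimalPeriod F x₀ * r) * p = M := by rw [← hMeq]; ring
      have hpM : p ∣ M := ⟨Function.minimalPeriod F x₀ * r, by rw [← hKM]; ring⟩
      have hp23 : p = 2 ∨ p = 3 := by
        rw [hM] at hpM
        rcases (Nat.Prime.dvd_mul hp).mp hpM with h | h
        · left
          have := Nat.le_of_dvd (by norm_num) h
          have := hp.two_le
          omega
        · right
          exact (Nat.prime_dvd_prime_iff_eq hp Nat.prime_three).mp (hp.dvd_of_dvd_pow h)
      have hKx : F^[Function.minimalPeriod F x₀ * r] x₀ = x₀ := hKper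
      rcases hp23 with hp2 | hp3
      · -- p = 2 : K = 3^(n-3) is odd
        rw [hp2, hM] at hKM
        have hK : Function.minimalPeriod F x₀ * r = 3^(n-3) := by omega
        have hdd := hdvdK _ hKx
        rw [hK] at hdd
        have h3d : (3:ℤ) ∣ (useq (μ:ℤ) 3 (3^(n-3)) - 1) :=
          dvd_trans (dvd_pow_self (3:ℤ) (by omega : n-1 ≠ 0)) hdd
        obtain ⟨k2, hk2⟩ : ∃ k2, 3^(n-3) = 2*k2+1 := by
          have hodd : Odd (3^(n-3) : ℕ) := Odd.pow (by decide)
          obtain ⟨c, hc⟩ := hodd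
          exact ⟨c, by omega⟩
        rw [hk2] at hdd h3d
        obtain ⟨a, hai⟩ := (parity (z := 3) t 1 ht (by norm_num) k2).2
        rw [hai] at h3d
        obtain ⟨w, hw⟩ := h3d
        omega
      · -- p = 3 : K = 2*3^(n-4)
        rw [hp3, hM] at hKM
        have hn4 : 4 ≤ n := by
          by_contra h4
          have hn3 : n = 3 := by omega
          rw [hn3] at hKM
          norm_num at hKM
          omega
        have hpow : (3:ℕ)^(n-3) = 3^(n-4)*3 := by rw [← pow_succ]; congr 1; omega
        rw [hpow] at hKM
        have hK : Function.minimalPeriod F x₀ * r = 2*3^(n-4) := by omega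
        have hdd := hdvdK _ hKx
        rw [hK] at hdd
        obtain ⟨c, hc, hc3⟩ := L2 t ht ht3 (n-4)
        have e42 : n-4+2 = n-2 := by omega
        rw [e42] at hc
        rw [hc] at hdd
        obtain ⟨w, hw⟩ := hdd
        apply hc3
        refine ⟨w, ?_⟩
        have h1 : (3:ℤ)^(n-1) = 3^(n-2)*3 := by rw [← pow_succ]; congr 1; omega
        rw [h1] at hw
        have h2 : (3:ℤ)^(n-2) * c = 3^(n-2) * (3*w) := by linarith
        exact mul_left_cancel₀ (pow_ne_zero _ (by norm_num : (3:ℤ) ≠ 0)) h2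
    have hle := Finset.le_sup (f := fun y : ZMod N => Function.minimalPeriod F y)
      (Finset.mem_univ x₀)
    have hle' : Function.minimalPeriod F x₀ ≤
        Finset.univ.sup (fun y : ZMod N => Function.minimalPeriod F y) := hle
    rw [hLM] at hle'
    exact hle'
end

section
/- Let μ be a positive integer with μ ≡ 2 (mod 3), define F : ℤ → ℤ by F(x) = μ·x·(x+1), and let k be any integer. Then F^[2](3k) ≡ 3k (mod 9). Moreover, modulo 27: F^[2](3k) ≡ 12k if μ mod 9 = 2; F^[2](3k) ≡ 21k if μ mod 9 = 5; and F^[2](3k) ≡ 3k if μ mod 9 = 8. -/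
/-- Equations (11)–(12) in the proof of Corollary 1: for a positive integer `μ` with
`μ ≡ 2 (mod 3)`, `F(x) = μ·x·(x+1)` and any integer `k`:
`F^[2](3k) ≡ 3k (mod 9)`; and modulo 27, `F^[2](3k) ≡ 12k` if `μ mod 9 = 2`,
`F^[2](3k) ≡ 21k` if `μ mod 9 = 5`, and `F^[2](3k) ≡ 3k` if `μ mod 9 = 8`. -/
theorem logistic_second_iterate_modEq (μ : ℕ) (hμ : 0 < μ) (hμ3 : μ % 3 = 2) (k : ℤ) :
    (fun y : ℤ => (μ : ℤ) * y * (y + 1))^[2] (3 * k) ≡ 3 * k [ZMOD 9] ∧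
    (μ % 9 = 2 → (fun y : ℤ => (μ : ℤ) * y * (y + 1))^[2] (3 * k) ≡ 12 * k [ZMOD 27]) ∧
    (μ % 9 = 5 → (fun y : ℤ => (μ : ℤ) * y * (y + 1))^[2] (3 * k) ≡ 21 * k [ZMOD 27]) ∧
    (μ % 9 = 8 → (fun y : ℤ => (μ : ℤ) * y * (y + 1))^[2] (3 * k) ≡ 3 * k [ZMOD 27]) := by
  simp only [Function.iterate_succ, Function.iterate_zero, Function.comp_apply, id_eq]
  set m : ℤ := (μ : ℤ) with hm
  refine ⟨?_, ?_, ?_, ?_⟩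
  · obtain ⟨q, hq⟩ : ∃ q : ℤ, m = 3 * q + 2 := ⟨m / 3, by omega⟩
    refine (Int.modEq_iff_dvd.mpr ⟨-(1*k + 12*k^2 + 48*k^3 + 72*k^4 + 4*q*k + 48*q*k^2
      + 216*q*k^3 + 324*q*k^4 + 3*q^2*k + 63*q^2*k^2 + 324*q^2*k^3 + 486*q^2*k^4
      + 27*q^3*k^2 + 162*q^3*k^3 + 243*q^3*k^4), by rw [hq]; ring⟩)
  · intro h9
    obtain ⟨q, hq⟩ : ∃ q : ℤ, m = 9 * q + 2 := ⟨m / 9, by omega⟩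
    refine (Int.modEq_iff_dvd.mpr ⟨-(4*k^2 + 16*k^3 + 24*k^4 + 4*q*k + 48*q*k^2
      + 216*q*k^3 + 324*q*k^4 + 9*q^2*k + 189*q^2*k^2 + 972*q^2*k^3 + 1458*q^2*k^4
      + 243*q^3*k^2 + 1458*q^3*k^3 + 2187*q^3*k^4), by rw [hq]; ring⟩)
  · intro h9
    obtain ⟨q, hq⟩ : ∃ q : ℤ, m = 9 * q + 5 := ⟨m / 9, by omega⟩
    refine (Int.modEq_iff_dvd.mpr ⟨-(2*k + 50*k^2 + 250*k^3 + 375*k^4 + 10*q*k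
      + 255*q*k^2 + 1350*q*k^3 + 2025*q*k^4 + 9*q^2*k + 432*q^2*k^2 + 2430*q^2*k^3
      + 3645*q^2*k^4 + 243*q^3*k^2 + 1458*q^3*k^3 + 2187*q^3*k^4), by rw [hq]; ring⟩)
  · intro h9
    obtain ⟨q, hq⟩ : ∃ q : ℤ, m = 9 * q + 8 := ⟨m / 9, by omega⟩
    refine (Int.modEq_iff_dvd.mpr ⟨-(7*k + 192*k^2 + 1024*k^3 + 1536*k^4 + 16*q*k
      + 624*q*k^2 + 3456*q*k^3 + 5184*q*k^4 + 9*q^2*k + 675*q^2*k^2 + 3888*q^2*k^3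
      + 5832*q^2*k^4 + 243*q^3*k^2 + 1458*q^3*k^3 + 2187*q^3*k^4), by rw [hq]; ring⟩)
end

section
/- Let n ≥ 2 and let μ be a positive integer with μ ≡ 1 (mod 3). Define f : ZMod(3^n) → ZMod(3^n) by f(x) = μ·x·(x+1). Let x₀ be an integer divisible by 3 whose residue modulo 27 lies in {3, 12, 6, 15} if μ mod 9 = 1, in {3, 21} if μ mod 9 = 4, and in {6, 24} if μ mod 9 = 7. Then the minimal period of the point x₀ mod 3^n under f equals 3^{n−2}. -/
namespace LAMP

/-- The integer logistic map. -/
def g (M : ℤ) (x : ℤ) : ℤ := M * x * (x + 1)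

/-- Product of derivatives along the orbit. -/
def D (M : ℤ) (k : ℕ) (y : ℤ) : ℤ :=
  ∏ i ∈ Finset.range k, (M * (2 * (g M)^[i] y + 1))

lemma g_dvd3 (M y : ℤ) (h : 3 ∣ y) : 3 ∣ g M y := by
  unfold g
  exact dvd_mul_of_dvd_left (dvd_mul_of_dvd_right h M) (y + 1)

lemma iter_dvd3 (M : ℤ) (k : ℕ) (y : ℤ) (h : 3 ∣ y) : 3 ∣ (g M)^[k] y := by
  induction k with
  | zero => simpa using h
  | succ k ih => rw [Function.iterate_succ_apply']; exact g_dvd3 M _ ih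

lemma D_mod3 (M : ℤ) (hM : M % 3 = 1) (k : ℕ) (y : ℤ) (h : 3 ∣ y) :
    D M k y % 3 = 1 := by
  induction k with
  | zero => simp [D]
  | succ k ih =>
    have hfac : (M * (2 * (g M)^[k] y + 1)) % 3 = 1 := by
      obtain ⟨z, hz⟩ := iter_dvd3 M k y h
      obtain ⟨q, hq⟩ : ∃ q, M = 3 * q + 1 := ⟨M / 3, by omega⟩
      have : M * (2 * (g M)^[k] y + 1) = 3 * (q * (6 * z + 1) + 2 * z) + 1 := by
        rw [hz, hq]; ring
      omega
    obtain ⟨a, ha⟩ : ∃ a, D M k y = 3 * a + 1 := ⟨D M k y / 3, by omega⟩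
    obtain ⟨b, hb⟩ : ∃ b, M * (2 * (g M)^[k] y + 1) = 3 * b + 1 :=
      ⟨(M * (2 * (g M)^[k] y + 1)) / 3, by omega⟩
    have : D M (k + 1) y = 3 * (3 * a * b + a + b) + 1 := by
      rw [D, Finset.prod_range_succ, ← D, ha, hb]; ring
    omega

lemma taylor (M : ℤ) (k : ℕ) (y c : ℤ) :
    ∃ e, (g M)^[k] (y + c) = (g M)^[k] y + c * D M k y + c ^ 2 * e := by
  induction k with
  | zero => exact ⟨0, by simp [D]⟩
  | succ k ih =>
    obtain ⟨e, he⟩ := ih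
    refine ⟨e * (M * (2 * (g M)^[k] y + 1)) + M * (D M k y + c * e) ^ 2, ?_⟩
    rw [Function.iterate_succ_apply', Function.iterate_succ_apply', he]
    have hD : D M (k + 1) y = D M k y * (M * (2 * (g M)^[k] y + 1)) := by
      rw [D, Finset.prod_range_succ, ← D]
    rw [hD]
    unfold g
    ring

lemma key (M : ℤ) (hM3 : M % 3 = 1) (x₀ : ℤ) (h3 : 3 ∣ x₀)
    (hbase : ∃ t, g M x₀ = x₀ + 9 * t ∧ t % 3 ≠ 0) (m : ℕ) :
    ∃ t, (g M)^[3 ^ m] x₀ = x₀ + 3 ^ (m + 2) * t ∧ t % 3 ≠ 0 := by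
  induction m with
  | zero =>
    obtain ⟨t, ht, ht3⟩ := hbase
    exact ⟨t, by simpa [g] using ht, ht3⟩
  | succ m ih =>
    obtain ⟨t, ht, ht3⟩ := ih
    have hD : D M (3 ^ m) x₀ % 3 = 1 := D_mod3 M hM3 _ x₀ h3
    obtain ⟨q, hq⟩ : ∃ q, D M (3 ^ m) x₀ = 3 * q + 1 := ⟨D M (3 ^ m) x₀ / 3, by omega⟩
    obtain ⟨e₁, he₁⟩ := taylor M (3 ^ m) x₀ (3 ^ (m + 2) * t)
    set s : ℤ := 1 + (3 * q + 1) + 3 ^ (m + 2) * t * e₁ with hs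
    obtain ⟨e₂, he₂⟩ := taylor M (3 ^ m) x₀ (3 ^ (m + 2) * t * s)
    have hit3 : (g M)^[3 ^ (m + 1)] x₀ =
        (g M)^[3 ^ m] ((g M)^[3 ^ m] ((g M)^[3 ^ m] x₀)) := by
      rw [← Function.iterate_add_apply, ← Function.iterate_add_apply]
      congr 1
      ring
    have step2 : (g M)^[3 ^ m] (x₀ + 3 ^ (m + 2) * t) = x₀ + 3 ^ (m + 2) * t * s := by
      rw [he₁, ht, hq, hs]; ring
    have step3 : (g M)^[3 ^ m] (x₀ + 3 ^ (m + 2) * t * s) =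
        x₀ + 3 ^ (m + 2) * t * (1 + s * (3 * q + 1) + 3 ^ (m + 2) * t * s ^ 2 * e₂) := by
      rw [he₂, ht, hq]; ring
    have hall : (g M)^[3 ^ (m + 1)] x₀ =
        x₀ + 3 ^ (m + 2) * t * (1 + s * (3 * q + 1) + 3 ^ (m + 2) * t * s ^ 2 * e₂) := by
      rw [hit3, ht, step2, step3]
    set u : ℤ := 1 + 3 * (q * q + q + 3 ^ m * t * (e₁ * (3 * q + 1) + s ^ 2 * e₂)) with hu
    refine ⟨t * u, ?_, ?_⟩
    · rw [hall, hu, hs]; ring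
    · have hu3 : u % 3 = 1 := by omega
      rw [Int.mul_emod, hu3, mul_one]
      omega

lemma base_of (M x E : ℤ) (hE : g M x = E)
    (h : (E - x) % 27 = 9 ∨ (E - x) % 27 = 18) :
    ∃ t, g M x = x + 9 * t ∧ t % 3 ≠ 0 := by
  refine ⟨(E - x) / 9, ?_, by omega⟩
  rw [hE]; omega

lemma cast_iter (μ : ℕ) (n k : ℕ) (x : ℤ) :
    (((g (μ : ℤ))^[k] x : ℤ) : ZMod (3 ^ n)) =
      (fun y : ZMod (3 ^ n) => (μ : ZMod (3 ^ n)) * y * (y + 1))^[k] (x : ZMod (3 ^ n)) := by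
  induction k with
  | zero => simp
  | succ k ih =>
    rw [Function.iterate_succ_apply', Function.iterate_succ_apply', ← ih]
    unfold g
    push_cast
    ring

end LAMP

/-- Sufficient condition for achieving the maximum period (case `μ ≡ 1 mod 3`,
from the proof of Corollary 1): for `n ≥ 2`, a positive integer `μ` with
`μ ≡ 1 (mod 3)`, and an integer `x₀` divisible by 3 whose residue mod 27 lies in
`{3, 12, 6, 15}` if `μ mod 9 = 1`, in `{3, 21}` if `μ mod 9 = 4`, and in `{6, 24}`
if `μ mod 9 = 7`, the minimal period of `x₀ mod 3^n` under `f(x) = μ·x·(x+1)` on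
`ZMod (3^n)` equals `3^{n−2}`. -/
theorem logistic_achieves_max_period_mu_one (n : ℕ) (hn : 2 ≤ n) (μ : ℕ) (hμ : 0 < μ)
    (hμ3 : μ % 3 = 1) (x₀ : ℤ) (h3 : (3 : ℤ) ∣ x₀)
    (hx₀ : (μ % 9 = 1 ∧ (x₀ % 27 = 3 ∨ x₀ % 27 = 12 ∨ x₀ % 27 = 6 ∨ x₀ % 27 = 15)) ∨
           (μ % 9 = 4 ∧ (x₀ % 27 = 3 ∨ x₀ % 27 = 21)) ∨
           (μ % 9 = 7 ∧ (x₀ % 27 = 6 ∨ x₀ % 27 = 24))) :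
    Function.minimalPeriod
        (fun x : ZMod (3 ^ n) => (μ : ZMod (3 ^ n)) * x * (x + 1)) (x₀ : ZMod (3 ^ n)) =
      3 ^ (n - 2) := by
  set M : ℤ := (μ : ℤ) with hM
  have hM3 : M % 3 = 1 := by omega
  -- base case of the valuation induction
  have hbase : ∃ t, LAMP.g M x₀ = x₀ + 9 * t ∧ t % 3 ≠ 0 := by
    rcases hx₀ with ⟨h9, hv⟩ | ⟨h9, hv⟩ | ⟨h9, hv⟩
    · have hM9 : M % 9 = 1 := by omega
      obtain ⟨j, hj⟩ : ∃ j : ℤ, M = 9 * j + 1 := ⟨M / 9, by omega⟩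
      rcases hv with hv | hv | hv | hv
      · obtain ⟨k, hk⟩ : ∃ k : ℤ, x₀ = 27 * k + 3 := ⟨x₀ / 27, by omega⟩
        refine LAMP.base_of M x₀ (M * x₀ * (x₀ + 1)) rfl (Or.inl ?_)
        rw [hj, hk]
        have h27 : (9*j+1)*(27*k+3)*((27*k+3)+1) - (27*k+3) = 27*(6*k + 27*k^2 + 4*j + 63*j*k + 243*j*k^2) + 9 := by ring
        rw [h27]
        omega
      · obtain ⟨k, hk⟩ : ∃ k : ℤ, x₀ = 27 * k + 12 := ⟨x₀ / 27, by omega⟩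
        refine LAMP.base_of M x₀ (M * x₀ * (x₀ + 1)) rfl (Or.inl ?_)
        rw [hj, hk]
        have h27 : (9*j+1)*(27*k+12)*((27*k+12)+1) - (27*k+12) = 27*(5 + 24*k + 27*k^2 + 52*j + 225*j*k + 243*j*k^2) + 9 := by ring
        rw [h27]
        omega
      · obtain ⟨k, hk⟩ : ∃ k : ℤ, x₀ = 27 * k + 6 := ⟨x₀ / 27, by omega⟩
        refine LAMP.base_of M x₀ (M * x₀ * (x₀ + 1)) rfl (Or.inl ?_)
        rw [hj, hk]
        have h27 : (9*j+1)*(27*k+6)*((27*k+6)+1) - (27*k+6) = 27*(1 + 12*k + 27*k^2 + 14*j + 117*j*k + 243*j*k^2) + 9 := by ring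
        rw [h27]
        omega
      · obtain ⟨k, hk⟩ : ∃ k : ℤ, x₀ = 27 * k + 15 := ⟨x₀ / 27, by omega⟩
        refine LAMP.base_of M x₀ (M * x₀ * (x₀ + 1)) rfl (Or.inl ?_)
        rw [hj, hk]
        have h27 : (9*j+1)*(27*k+15)*((27*k+15)+1) - (27*k+15) = 27*(8 + 30*k + 27*k^2 + 80*j + 279*j*k + 243*j*k^2) + 9 := by ring
        rw [h27]
        omega
    · have hM9 : M % 9 = 4 := by omega
      obtain ⟨j, hj⟩ : ∃ j : ℤ, M = 9 * j + 4 := ⟨M / 9, by omega⟩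
      rcases hv with hv | hv
      · obtain ⟨k, hk⟩ : ∃ k : ℤ, x₀ = 27 * k + 3 := ⟨x₀ / 27, by omega⟩
        refine LAMP.base_of M x₀ (M * x₀ * (x₀ + 1)) rfl (Or.inr ?_)
        rw [hj, hk]
        have h27 : (9*j+4)*(27*k+3)*((27*k+3)+1) - (27*k+3) = 27*(1 + 27*k + 108*k^2 + 4*j + 63*j*k + 243*j*k^2) + 18 := by ring
        rw [h27]
        omega
      · obtain ⟨k, hk⟩ : ∃ k : ℤ, x₀ = 27 * k + 21 := ⟨x₀ / 27, by omega⟩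
        refine LAMP.base_of M x₀ (M * x₀ * (x₀ + 1)) rfl (Or.inr ?_)
        rw [hj, hk]
        have h27 : (9*j+4)*(27*k+21)*((27*k+21)+1) - (27*k+21) = 27*(67 + 171*k + 108*k^2 + 154*j + 387*j*k + 243*j*k^2) + 18 := by ring
        rw [h27]
        omega
    · have hM9 : M % 9 = 7 := by omega
      obtain ⟨j, hj⟩ : ∃ j : ℤ, M = 9 * j + 7 := ⟨M / 9, by omega⟩
      rcases hv with hv | hv
      · obtain ⟨k, hk⟩ : ∃ k : ℤ, x₀ = 27 * k + 6 := ⟨x₀ / 27, by omega⟩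
        refine LAMP.base_of M x₀ (M * x₀ * (x₀ + 1)) rfl (Or.inr ?_)
        rw [hj, hk]
        have h27 : (9*j+7)*(27*k+6)*((27*k+6)+1) - (27*k+6) = 27*(10 + 90*k + 189*k^2 + 14*j + 117*j*k + 243*j*k^2) + 18 := by ring
        rw [h27]
        omega
      · obtain ⟨k, hk⟩ : ∃ k : ℤ, x₀ = 27 * k + 24 := ⟨x₀ / 27, by omega⟩
        refine LAMP.base_of M x₀ (M * x₀ * (x₀ + 1)) rfl (Or.inr ?_)
        rw [hj, hk]
        have h27 : (9*j+7)*(27*k+24)*((27*k+24)+1) - (27*k+24) = 27*(154 + 342*k + 189*k^2 + 200*j + 441*j*k + 243*j*k^2) + 18 := by ring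
        rw [h27]
        omega
  have hkey := LAMP.key M hM3 x₀ h3 hbase
  set f : ZMod (3 ^ n) → ZMod (3 ^ n) := fun x => (μ : ZMod (3 ^ n)) * x * (x + 1) with hf
  -- x₀ is periodic with period 3^(n-2)
  have hper : Function.IsPeriodicPt f (3 ^ (n - 2)) (x₀ : ZMod (3 ^ n)) := by
    obtain ⟨t, ht, _⟩ := hkey (n - 2)
    have he : n - 2 + 2 = n := by omega
    rw [he] at ht
    show f^[3 ^ (n - 2)] (x₀ : ZMod (3 ^ n)) = (x₀ : ZMod (3 ^ n))
    rw [← LAMP.cast_iter μ n (3 ^ (n - 2)) x₀, ht]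
    push_cast
    have hz : ((3 : ZMod (3 ^ n)) ^ n) = 0 := by
      have : (((3 ^ n : ℕ)) : ZMod (3 ^ n)) = 0 := ZMod.natCast_self _
      push_cast at this
      exact this
    rw [hz]
    ring
  have hdvd := hper.minimalPeriod_dvd
  obtain ⟨k, hkle, hL⟩ := (Nat.dvd_prime_pow Nat.prime_three).mp hdvd
  rw [hL]
  by_contra hne
  have hkne : k ≠ n - 2 := fun h => hne (by rw [h])
  have hkn : k ≤ n - 3 ∧ 3 ≤ n := by
    constructor <;> omega
  have hdvd2 : Function.minimalPeriod f (x₀ : ZMod (3 ^ n)) ∣ 3 ^ (n - 3) := by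
    rw [hL]
    exact pow_dvd_pow 3 hkn.1
  have hper2 : Function.IsPeriodicPt f (3 ^ (n - 3)) (x₀ : ZMod (3 ^ n)) :=
    (Function.isPeriodicPt_minimalPeriod f _).trans_dvd hdvd2
  obtain ⟨t, ht, ht3⟩ := hkey (n - 3)
  have he : n - 3 + 2 = n - 1 := by omega
  rw [he] at ht
  have hcast : f^[3 ^ (n - 3)] (x₀ : ZMod (3 ^ n)) =
      (x₀ : ZMod (3 ^ n)) + ((3 ^ (n - 1) * t : ℤ) : ZMod (3 ^ n)) := by
    rw [← LAMP.cast_iter μ n (3 ^ (n - 3)) x₀, ht]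
    push_cast
    ring
  have hzero : ((3 ^ (n - 1) * t : ℤ) : ZMod (3 ^ n)) = 0 := by
    have h0 := hper2
    rw [Function.IsPeriodicPt, Function.IsFixedPt, hcast] at h0
    exact add_eq_left.mp h0
  have hdvd3 : ((3 ^ n : ℕ) : ℤ) ∣ 3 ^ (n - 1) * t :=
    (ZMod.intCast_zmod_eq_zero_iff_dvd _ _).mp hzero
  have h3t : (3 : ℤ) ∣ t := by
    have hpow : ((3 ^ n : ℕ) : ℤ) = 3 ^ (n - 1) * 3 := by
      push_cast
      rw [← pow_succ]
      congr 1
      omega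
    rw [hpow] at hdvd3
    obtain ⟨c, hc⟩ := hdvd3
    have hne0 : (3 : ℤ) ^ (n - 1) ≠ 0 := by positivity
    exact ⟨c, mul_left_cancel₀ hne0 (by rw [hc]; ring)⟩
  omega
end
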